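/- arXiv:2603.08010 — 5 statements merged into one kernel-verified Lean document; each statement's English description precedes it below -/
import Mathlib

section
/- Every computable injection structure with at least one infinite orbit has a punctual presentation. Precisely: for every injective computable function f : ℕ → ℕ such that the orbit O_f(a) is infinite for some a : ℕ, there exist an injective primitive recursive function g : ℕ → ℕ and a bijection φ : ℕ → ℕ with φ ∘ f = g ∘ φ. -/
/-- The orbit of `a` under `f`. -/
def Orbit (f : ℕ → ℕ) (a : ℕ) : Set ℕ := {b : ℕ | ∃ m n : ℕ, f^[m] a = f^[n] b}

/-!
An injection structure is determined up to isomorphism by its orbits: its cycles, its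
`ω`-chains (orbits with a point outside the range) and its `ℤ`-chains. Both `(ℕ, f)` and the
punctual structure `(ℕ, g)` are shown isomorphic to one normal form, whose points are `Cell`s.

In `g` the numbers of `ω`-chains and of `ℤ`-chains are hard-wired: each is a constant in
`ℕ ∪ {∞}`, and every choice gives a primitive recursive `g`. The cycles, which cannot be found
without unbounded search, are discovered with delay: `2 * ⟨x, k, s, i⟩` is the `i`-th point of a
cycle iff `s` is the first stage at which a computation of `f` certifies that `x` is the least
point of a cycle of length `k`, a primitive recursive test. Every number that fails its test is
placed, in increasing order, on the forward half of one infinite chain of `g` (it exists by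
hypothesis), so `g` never has to wait.
-/

open Function Set

theorem Computable.nat_iterate {α β : Type*} [Primcodable α] [Primcodable β]
    {f : α → ℕ} {g : α → β} {h : α → β → β} (hf : Computable f) (hg : Computable g)
    (hh : Computable₂ h) : Computable fun a => (h a)^[f a] (g a) :=
  (Computable.nat_rec hf hg (hh.comp Computable.fst (Computable.snd.comp Computable.snd)).to₂).of_eq
    fun a => by induction f a <;> simp [*, -Function.iterate_succ, Function.iterate_succ']

theorem ComputablePred.and {α : Type*} [Primcodable α] {p q : α → Prop}
    (hp : ComputablePred p) (hq : ComputablePred q) : ComputablePred fun a => p a ∧ q a := by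
  classical
  exact (ComputablePred.computable_iff.2
    ⟨_, Primrec.and.to_comp.comp hp.decide hq.decide, rfl⟩).of_eq fun a => by simp

theorem ComputablePred.forall_lt {α : Type*} [Primcodable α] {p : α → ℕ → Prop}
    (hp : ComputablePred fun q : α × ℕ => p q.1 q.2) :
    ComputablePred fun q : α × ℕ => ∀ j < q.2, p q.1 j := by
  classical
  have hrec : Computable fun q : α × ℕ =>
      Nat.rec (motive := fun _ => Bool) true (fun j b => b && decide (p q.1 j)) q.2 :=
    Computable.nat_rec Computable.snd (Computable.const true)
      (Primrec.and.to_comp.comp (Computable.snd.comp Computable.snd)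
        (hp.decide.comp ((Computable.fst.comp Computable.fst).pair
          (Computable.fst.comp Computable.snd)))).to₂
  refine (ComputablePred.computable_iff.2 ⟨_, hrec, rfl⟩).of_eq fun q => ?_
  induction q.2 with
  | zero => simp
  | succ n ih => simp [ih, Nat.le_iff_lt_or_eq, or_imp, forall_and]

open Nat.Partrec in
theorem REPred.exists_primrecRel {α : Type*} [Primcodable α] {p : α → Prop} (hp : REPred p) :
    ∃ q : ℕ → α → Prop, PrimrecRel q ∧ ∀ a, p a ↔ ∃ s, q s a := by
  obtain ⟨c, hc⟩ := Code.exists_code.1 hp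
  refine ⟨fun s a => (Code.evaln s c (Encodable.encode a)).isSome, ?_, fun a => ?_⟩
  · exact Primrec.eq.comp (Primrec.option_isSome.comp (Code.primrec_evaln.comp
      ((Primrec.fst.pair (Primrec.const c)).pair (Primrec.encode.comp Primrec.snd))))
      (Primrec.const true)
  · have hdom : (c.eval (Encodable.encode a)).Dom ↔ p a := by
      simp only [hc, Encodable.encodek, Part.coe_some, Part.bind_some, Part.map_Dom]
      exact ⟨fun ⟨h, _⟩ => h, fun h => ⟨h, trivial⟩⟩
    simp only [← hdom, Part.dom_iff_mem, Code.evaln_complete, Option.isSome_iff_exists,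
      Option.mem_def]
    exact exists_comm

theorem PrimrecPred.computablePred_comp {α β : Type*} [Primcodable α] [Primcodable β]
    {p : β → Prop} {F : α → β} (hp : PrimrecPred p) (hF : Computable F) :
    ComputablePred fun a => p (F a) := by
  classical
  exact (hp.decide.to_comp.comp hF).computablePred

theorem Primrec.nat_count {p : ℕ → Prop} [DecidablePred p] (hp : PrimrecPred p) :
    Primrec (Nat.count p) :=
  (Primrec.list_length.comp ((Primrec.listFilter hp).comp Primrec.list_range)).of_eq fun n => by
    simp [Nat.count, List.countP_eq_length_filter]

theorem Primrec.nat_nth {p : ℕ → Prop} (hp : PrimrecPred p) (hinf : (Set.ofPred p).Infinite)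
    {B : ℕ → ℕ} (hB : Primrec B) (hle : ∀ n, Nat.nth p n ≤ B n) : Primrec (Nat.nth p) := by
  classical
  refine Primrec.of_graph ⟨B, hB, hle⟩ (((hp.comp Primrec.snd).and
    (Primrec.eq.comp ((Primrec.nat_count hp).comp Primrec.snd) Primrec.fst)).of_eq fun ⟨n, m⟩ => ?_)
  dsimp only
  constructor
  · rintro ⟨hm, rfl⟩
    exact Nat.nth_count hm
  · rintro rfl
    exact ⟨Nat.nth_mem_of_infinite hinf n, Nat.count_nth_of_infinite hinf n⟩

theorem exists_primrecPred_bijOn (S : Set ℕ) :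
    ∃ (U : Set ℕ) (e : ℕ → ℕ), PrimrecPred (· ∈ U) ∧ BijOn e U S := by
  classical
  -- `U` is an initial segment of `ℕ`, hence primitive recursive however complex `S` is.
  refine ⟨{n | ∀ hS : S.Finite, n < hS.toFinset.card}, Nat.nth (· ∈ S), ?_,
    fun n hn => Nat.nth_mem n hn, ?_, fun x hx => Nat.exists_lt_card_nth_eq hx⟩
  · by_cases hS : S.Finite
    · exact (Primrec.nat_lt.comp Primrec.id (Primrec.const _)).of_eq fun n =>
        ⟨fun h _ => h, fun h => h hS⟩
    · exact (Primrec.primrecPred (p := fun _ => True) (Primrec.const true)).of_eq fun n => by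
        simp [hS]
  · by_cases hS : S.Finite
    · exact (Nat.nth_injOn hS).mono fun n hn => hn hS
    · exact (Nat.nth_injective hS).injOn

section Orbit

variable {f : ℕ → ℕ} {a b c : ℕ}

theorem iterate_mem_orbit (n : ℕ) (a : ℕ) : f^[n] a ∈ Orbit f a := ⟨n, 0, rfl⟩

theorem mem_orbit_self (a : ℕ) : a ∈ Orbit f a := iterate_mem_orbit 0 a

theorem mem_orbit_comm : b ∈ Orbit f a ↔ a ∈ Orbit f b :=
  ⟨fun ⟨m, n, h⟩ => ⟨n, m, h.symm⟩, fun ⟨m, n, h⟩ => ⟨n, m, h.symm⟩⟩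

theorem mem_orbit_trans (hb : b ∈ Orbit f a) (hc : c ∈ Orbit f b) : c ∈ Orbit f a := by
  obtain ⟨m, n, hmn⟩ := hb
  obtain ⟨p, q, hpq⟩ := hc
  refine ⟨p + m, n + q, ?_⟩
  rw [iterate_add_apply, hmn, ← iterate_add_apply, add_comm, iterate_add_apply, hpq,
    ← iterate_add_apply]

theorem orbit_eq_of_mem (hb : b ∈ Orbit f a) : Orbit f b = Orbit f a :=
  Set.ext fun _ => ⟨mem_orbit_trans hb, mem_orbit_trans (mem_orbit_comm.1 hb)⟩

theorem mem_orbit_of_apply_mem (h : f b ∈ Orbit f a) : b ∈ Orbit f a := by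
  obtain ⟨m, n, hmn⟩ := h
  exact ⟨m, n + 1, by rw [hmn, iterate_succ_apply]⟩

theorem orbit_eq_of_mem_of_mem (ha : c ∈ Orbit f a) (hb : c ∈ Orbit f b) : Orbit f a = Orbit f b :=
  (orbit_eq_of_mem ha).symm.trans (orbit_eq_of_mem hb)

theorem exists_isLeast_orbit (f : ℕ → ℕ) (a : ℕ) : ∃ m, IsLeast (Orbit f a) m :=
  ⟨sInf (Orbit f a), Nat.sInf_mem ⟨a, mem_orbit_self a⟩, fun _ => Nat.sInf_le⟩

variable (hf : Injective f)
include hf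

theorem orbit_cases (h : b ∈ Orbit f a) : (∃ n, f^[n] a = b) ∨ ∃ n, f^[n + 1] b = a := by
  obtain ⟨m, n, hmn⟩ := h
  rcases le_or_gt n m with hnm | hmn'
  · refine Or.inl ⟨m - n, hf.iterate n ?_⟩
    rwa [← iterate_add_apply, Nat.add_sub_cancel' hnm]
  · refine Or.inr ⟨n - m - 1, hf.iterate m ?_⟩
    rw [← iterate_add_apply, show m + (n - m - 1 + 1) = n by omega, hmn]

theorem exists_iterate_eq_of_mem_periodicPts (ha : a ∈ periodicPts f) (hb : b ∈ Orbit f a) :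
    ∃ i < minimalPeriod f a, f^[i] a = b := by
  have hp := minimalPeriod_pos_of_mem_periodicPts ha
  suffices ∃ n, f^[n] a = b by
    obtain ⟨n, rfl⟩ := this
    exact ⟨n % minimalPeriod f a, Nat.mod_lt _ hp, iterate_mod_minimalPeriod_eq⟩
  refine (orbit_cases hf hb).elim id fun ⟨n, hn⟩ =>
    ⟨(n + 1) * minimalPeriod f a - (n + 1), hf.iterate (n + 1) ?_⟩
  rw [hn, ← iterate_add_apply, Nat.add_sub_cancel' (Nat.le_mul_of_pos_right _ hp)]
  exact ((isPeriodicPt_minimalPeriod f a).const_mul (n + 1)).eq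

theorem mem_periodicPts_of_mem_orbit (ha : a ∈ periodicPts f) (hb : b ∈ Orbit f a) :
    b ∈ periodicPts f := by
  obtain ⟨i, -, rfl⟩ := exists_iterate_eq_of_mem_periodicPts hf ha hb
  exact mk_mem_periodicPts (minimalPeriod_pos_of_mem_periodicPts ha)
    ((isPeriodicPt_minimalPeriod f a).apply_iterate i)

theorem notMem_periodicPts_of_mem_orbit (ha : a ∉ periodicPts f) (hb : b ∈ Orbit f a) :
    b ∉ periodicPts f :=
  fun hb' => ha (mem_periodicPts_of_mem_orbit hf hb' (mem_orbit_comm.1 hb))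

theorem notMem_periodicPts_of_infinite (ha : (Orbit f a).Infinite) : a ∉ periodicPts f :=
  fun hper => ha <| ((Set.finite_Iio (minimalPeriod f a)).image (f^[·] a)).subset fun _ hb =>
    exists_iterate_eq_of_mem_periodicPts hf hper hb

theorem exists_start_of_infinite_orbit (ha : (Orbit f a).Infinite) :
    ∃ a₀, a₀ ∉ periodicPts f ∧ (Orbit f a₀ ⊆ range f ∨ a₀ ∉ range f) := by
  by_cases h : Orbit f a ⊆ range f
  · exact ⟨a, notMem_periodicPts_of_infinite hf ha, Or.inl h⟩
  · obtain ⟨b, -, hb⟩ := not_subset.1 h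
    exact ⟨b, fun hper => hb (periodicPts_subset_range hper), Or.inr hb⟩

theorem iterate_injective_of_notMem_periodicPts (ha : a ∉ periodicPts f) :
    Injective fun n => f^[n] a := by
  refine Injective.of_lt_imp_ne fun i j hij h => ha (mk_mem_periodicPts (Nat.sub_pos_of_lt hij) ?_)
  refine hf.iterate i ?_
  rw [← iterate_add_apply, Nat.add_sub_cancel' hij.le, h]

theorem eq_of_mem_orbit_of_notMem_range (ha : a ∉ range f) (hb : b ∉ range f)
    (h : b ∈ Orbit f a) : b = a := by
  rcases orbit_cases hf h with ⟨_ | n, rfl⟩ | ⟨n, rfl⟩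
  · rfl
  · exact absurd ⟨_, (iterate_succ_apply' f n a).symm⟩ hb
  · exact absurd ⟨_, (iterate_succ_apply' f n b).symm⟩ ha

end Orbit

/-- Negative iterates are taken along `invFun f`, so this is a `ℤ`-action only on orbits
contained in `range f`. -/
noncomputable def zIterate (f : ℕ → ℕ) : ℤ → ℕ → ℕ
  | Int.ofNat n => f^[n]
  | Int.negSucc n => (invFun f)^[n + 1]

section zIterate

variable {f : ℕ → ℕ} {a b : ℕ}

theorem zIterate_of_nonneg {i : ℤ} (hi : 0 ≤ i) (a : ℕ) : zIterate f i a = f^[i.toNat] a := by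
  lift i to ℕ using hi
  rfl

theorem invFun_iterate_mem_orbit (hrange : Orbit f a ⊆ range f) (n : ℕ) :
    (invFun f)^[n] a ∈ Orbit f a := by
  induction n with
  | zero => exact mem_orbit_self a
  | succ n ih =>
    refine mem_orbit_of_apply_mem ?_
    rwa [iterate_succ_apply', invFun_eq (hrange ih)]

theorem apply_zIterate {i : ℤ} (hi : 0 ≤ i ∨ Orbit f a ⊆ range f) :
    f (zIterate f i a) = zIterate f (i + 1) a := by
  rcases i with n | n
  · exact (iterate_succ_apply' f n a).symm
  · have hrange := hi.resolve_left (Int.negSucc_lt_zero n).not_ge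
    rcases n with _ | n
    · exact invFun_eq (hrange (mem_orbit_self a))
    · show f ((invFun f)^[n + 2] a) = (invFun f)^[n + 1] a
      rw [iterate_succ_apply' (invFun f) (n + 1)]
      exact invFun_eq (hrange (invFun_iterate_mem_orbit hrange _))

theorem iterate_zIterate {i : ℤ} (hi : 0 ≤ i ∨ Orbit f a ⊆ range f) (n : ℕ) :
    f^[n] (zIterate f i a) = zIterate f (i + n) a := by
  induction n with
  | zero => simp
  | succ n ih =>
    rw [iterate_succ_apply', ih, apply_zIterate (hi.imp_left fun h => by omega)]
    push_cast
    ring_nf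

theorem zIterate_mem_orbit {i : ℤ} (hi : 0 ≤ i ∨ Orbit f a ⊆ range f) :
    zIterate f i a ∈ Orbit f a := by
  refine ⟨(i + i.natAbs).toNat, i.natAbs, ?_⟩
  rw [iterate_zIterate hi, zIterate_of_nonneg (by omega)]

theorem eq_of_zIterate_eq (hf : Injective f) (ha : a ∉ periodicPts f) {i j : ℤ}
    (hi : 0 ≤ i ∨ Orbit f a ⊆ range f) (hj : 0 ≤ j ∨ Orbit f a ⊆ range f)
    (h : zIterate f i a = zIterate f j a) : i = j := by
  set N := i.natAbs + j.natAbs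
  have := congrArg (f^[N]) h
  rw [iterate_zIterate hi, iterate_zIterate hj, zIterate_of_nonneg (by omega),
    zIterate_of_nonneg (by omega)] at this
  have := iterate_injective_of_notMem_periodicPts hf ha this
  omega

theorem zIterate_negSucc_of_iterate (hf : Injective f) {n : ℕ} (h : f^[n + 1] b = a) :
    zIterate f (Int.negSucc n) a = b := by
  rw [← h]
  exact (leftInverse_invFun hf).iterate (n + 1) b

theorem exists_zIterate_eq (hf : Injective f) (h : b ∈ Orbit f a) : ∃ i, zIterate f i a = b := by
  rcases orbit_cases hf h with ⟨n, hn⟩ | ⟨n, hn⟩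
  · exact ⟨n, hn⟩
  · exact ⟨Int.negSucc n, zIterate_negSucc_of_iterate hf hn⟩

end zIterate

/-- `x` is the least point of a cycle of length `k`, stated so that it can be checked from the
first `k` iterates of `x`. -/
def IsCycleRep (f : ℕ → ℕ) (x k : ℕ) : Prop :=
  0 < k ∧ f^[k] x = x ∧ ∀ j < k, 0 < j → x < f^[j] x

theorem isCycleRep_iff {f : ℕ → ℕ} (hf : Injective f) {x k : ℕ} :
    IsCycleRep f x k ↔ x ∈ periodicPts f ∧ minimalPeriod f x = k ∧ IsLeast (Orbit f x) x := by
  constructor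
  · rintro ⟨hk, hfix, hlt⟩
    have hper : x ∈ periodicPts f := mk_mem_periodicPts hk hfix
    have hmin : minimalPeriod f x = k := by
      refine le_antisymm (IsPeriodicPt.minimalPeriod_le hk hfix) (not_lt.1 fun h => ?_)
      have := hlt _ h (minimalPeriod_pos_of_mem_periodicPts hper)
      rw [iterate_minimalPeriod] at this
      exact this.false
    refine ⟨hper, hmin, mem_orbit_self x, fun y hy => ?_⟩
    obtain ⟨i, hi, rfl⟩ := exists_iterate_eq_of_mem_periodicPts hf hper hy
    rcases i.eq_zero_or_pos with rfl | hi0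
    · exact le_rfl
    · exact (hlt i (hmin ▸ hi) hi0).le
  · rintro ⟨hper, rfl, hleast⟩
    refine ⟨minimalPeriod_pos_of_mem_periodicPts hper, iterate_minimalPeriod, fun j hj hj0 => ?_⟩
    exact (hleast.2 (iterate_mem_orbit j x)).lt_of_ne
      fun h => not_isPeriodicPt_of_pos_of_lt_minimalPeriod hj0.ne' hj h.symm

theorem computablePred_isCycleRep {f : ℕ → ℕ} (hf : Computable f) :
    ComputablePred fun q : ℕ × ℕ => IsCycleRep f q.1 q.2 := by
  have hit : Computable fun q : ℕ × ℕ => (q.1, q.2, f^[q.2] q.1) :=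
    Computable.fst.pair (Computable.snd.pair
      (Computable.nat_iterate Computable.snd Computable.fst (hf.comp Computable.snd).to₂))
  have hclose : PrimrecPred fun t : ℕ × ℕ × ℕ => 0 < t.2.1 ∧ t.2.2 = t.1 :=
    (Primrec.nat_lt.comp (Primrec.const 0) (Primrec.fst.comp Primrec.snd)).and
      (Primrec.eq.comp (Primrec.snd.comp Primrec.snd) Primrec.fst)
  have hgrow : PrimrecPred fun t : ℕ × ℕ × ℕ => 0 < t.2.1 → t.1 < t.2.2 :=
    ((Primrec.nat_lt.comp (Primrec.const 0) (Primrec.fst.comp Primrec.snd)).not.or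
      (Primrec.nat_lt.comp Primrec.fst (Primrec.snd.comp Primrec.snd))).of_eq
      fun _ => imp_iff_not_or.symm
  exact ((hclose.computablePred_comp hit).and
    (ComputablePred.forall_lt (p := fun x j => 0 < j → x < f^[j] x)
      (hgrow.computablePred_comp hit))).of_eq
    fun q => by simp only [IsCycleRep, and_assoc]

/-- Points of the normal form of an injection structure: the `i`-th point of the cycle of
length `k` through its least point `x`, the `i`-th point of the `u`-th `ω`-chain, the `i`-th
point of the `u`-th `ℤ`-chain, and the `i`-th point of a distinguished infinite chain. -/
inductive Cell
  | cyc (x k i : ℕ)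
  | omega (u i : ℕ)
  | zeta (u : ℕ) (i : ℤ)
  | main (i : ℤ)

inductive OrbitKind
  | cyc
  | omega
  | zeta
  | main

namespace Cell

def next : Cell → Cell
  | cyc x k i => cyc x k ((i + 1) % k)
  | omega u i => omega u (i + 1)
  | zeta u i => zeta u (i + 1)
  | main i => main (i + 1)

def kind : Cell → OrbitKind
  | cyc .. => .cyc
  | omega .. => .omega
  | zeta .. => .zeta
  | main _ => .main

/-- The cells of the normal form with cycles `Rep`, `ω`-chains labelled by `W`, `ℤ`-chains
labelled by `Z`, and a main chain which is a `ℤ`-chain if `bw` holds and an `ω`-chain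
otherwise. -/
def Admissible (Rep : ℕ → ℕ → Prop) (W Z : Set ℕ) (bw : Prop) : Cell → Prop
  | cyc x k i => Rep x k ∧ i < k
  | omega u _ => u ∈ W
  | zeta u _ => u ∈ Z
  | main i => 0 ≤ i ∨ bw

theorem Admissible.next {Rep : ℕ → ℕ → Prop} {W Z : Set ℕ} {bw : Prop} {c : Cell}
    (hc : c.Admissible Rep W Z bw) : c.next.Admissible Rep W Z bw := by
  cases c with
  | cyc x k i => exact ⟨hc.1, Nat.mod_lt _ (by have := hc.2; omega)⟩
  | omega => exact hc
  | zeta => exact hc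
  | main i => exact hc.imp_left fun h => by omega

/-- The point of `(ℕ, f)` represented by a cell, given the starting point `a₀` of the main chain,
the bases `eW u` of the `ω`-chains and representatives `eZ u` of the `ℤ`-chains. -/
noncomputable def realize (f : ℕ → ℕ) (a₀ : ℕ) (eW eZ : ℕ → ℕ) : Cell → ℕ
  | cyc x _ i => f^[i] x
  | omega u i => f^[i] (eW u)
  | zeta u i => zIterate f i (eZ u)
  | main i => zIterate f i a₀

end Cell

section Realize

open Cell

variable (f : ℕ → ℕ) (a₀ : ℕ)

def omegaBases : Set ℕ := {b | b ∉ range f ∧ b ∉ Orbit f a₀}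

def zetaReps : Set ℕ :=
  {m | Orbit f m ⊆ range f ∧ m ∉ periodicPts f ∧ m ∉ Orbit f a₀ ∧ IsLeast (Orbit f m) m}

open Classical in
noncomputable def orbitKind (y : ℕ) : OrbitKind :=
  if y ∈ periodicPts f then .cyc
  else if y ∈ Orbit f a₀ then .main
  else if Orbit f y ⊆ range f then .zeta
  else .omega

variable {f a₀} {W Z : Set ℕ} {eW eZ : ℕ → ℕ}

theorem realize_next (hZ : MapsTo eZ Z (zetaReps f a₀)) {c : Cell}
    (hc : c.Admissible (IsCycleRep f) W Z (Orbit f a₀ ⊆ range f)) :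
    c.next.realize f a₀ eW eZ = f (c.realize f a₀ eW eZ) := by
  cases c with
  | cyc x k i =>
    show f^[(i + 1) % k] x = f (f^[i] x)
    rw [IsPeriodicPt.iterate_mod_apply hc.1.2.1, iterate_succ_apply']
  | omega u i => exact iterate_succ_apply' f i (eW u)
  | zeta u i => exact (apply_zIterate (Or.inr (hZ hc).1)).symm
  | main i => exact (apply_zIterate hc).symm

variable (hf : Injective f)
include hf

theorem orbitKind_realize (ha₀ : a₀ ∉ periodicPts f) (hW : MapsTo eW W (omegaBases f a₀))
    (hZ : MapsTo eZ Z (zetaReps f a₀)) {c : Cell}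
    (hc : c.Admissible (IsCycleRep f) W Z (Orbit f a₀ ⊆ range f)) :
    orbitKind f a₀ (c.realize f a₀ eW eZ) = c.kind := by
  cases c with
  | cyc x k i =>
    exact if_pos (mk_mem_periodicPts hc.1.1 (IsPeriodicPt.apply_iterate hc.1.2.1 i))
  | omega u i =>
    obtain ⟨hrange, hmain⟩ := hW hc
    have hy := iterate_mem_orbit (f := f) i (eW u)
    have hper : eW u ∉ periodicPts f := fun h => hrange (periodicPts_subset_range h)
    rw [realize, orbitKind, if_neg (notMem_periodicPts_of_mem_orbit hf hper hy),
      if_neg fun h => hmain (mem_orbit_trans h (mem_orbit_comm.1 hy)),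
      if_neg fun h => hrange (h (mem_orbit_comm.1 hy))]
    rfl
  | zeta u i =>
    obtain ⟨hrange, hper, hmain, -⟩ := hZ hc
    have hy := zIterate_mem_orbit (f := f) (i := i) (Or.inr hrange)
    rw [realize, orbitKind, if_neg (notMem_periodicPts_of_mem_orbit hf hper hy),
      if_neg fun h => hmain (mem_orbit_trans h (mem_orbit_comm.1 hy)),
      if_pos ((orbit_eq_of_mem hy).subset.trans hrange)]
    rfl
  | main i =>
    have hy := zIterate_mem_orbit (f := f) hc
    rw [realize, orbitKind, if_neg (notMem_periodicPts_of_mem_orbit hf ha₀ hy), if_pos hy]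
    rfl

theorem realize_injOn (ha₀ : a₀ ∉ periodicPts f) (hW : BijOn eW W (omegaBases f a₀))
    (hZ : BijOn eZ Z (zetaReps f a₀)) :
    InjOn (realize f a₀ eW eZ) {c | c.Admissible (IsCycleRep f) W Z (Orbit f a₀ ⊆ range f)} := by
  intro c hc c' hc' h
  have hkind : c.kind = c'.kind := by
    rw [← orbitKind_realize hf ha₀ hW.mapsTo hZ.mapsTo hc, h,
      orbitKind_realize hf ha₀ hW.mapsTo hZ.mapsTo hc']
  cases c <;> cases c' <;> cases hkind <;> simp only [realize] at h
  case cyc.cyc x k i x' k' i' =>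
    obtain ⟨hper, rfl, hleast⟩ := (isCycleRep_iff hf).1 hc.1
    obtain ⟨-, rfl, hleast'⟩ := (isCycleRep_iff hf).1 hc'.1
    have hxx' : Orbit f x = Orbit f x' :=
      orbit_eq_of_mem_of_mem (iterate_mem_orbit i x) (h ▸ iterate_mem_orbit i' x')
    obtain rfl : x = x' := hleast.unique (hxx' ▸ hleast')
    rw [(iterate_eq_iterate_iff_of_lt_minimalPeriod hc.2 hc'.2).1 h]
  case omega.omega u i u' i' =>
    obtain ⟨hb, -⟩ := hW.mapsTo hc
    have hbb' : eW u' ∈ Orbit f (eW u) := by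
      rw [orbit_eq_of_mem_of_mem (iterate_mem_orbit i (eW u)) (h ▸ iterate_mem_orbit i' (eW u'))]
      exact mem_orbit_self _
    obtain rfl :=
      hW.injOn hc hc' (eq_of_mem_orbit_of_notMem_range hf hb (hW.mapsTo hc').1 hbb').symm
    rw [iterate_injective_of_notMem_periodicPts hf (fun hp => hb (periodicPts_subset_range hp)) h]
  case zeta.zeta u i u' i' =>
    obtain ⟨hrange, hper, -, hleast⟩ := hZ.mapsTo hc
    have hmm' : Orbit f (eZ u) = Orbit f (eZ u') :=
      orbit_eq_of_mem_of_mem (zIterate_mem_orbit (i := i) (Or.inr hrange))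
        (h ▸ zIterate_mem_orbit (i := i') (Or.inr (hZ.mapsTo hc').1))
    obtain rfl := hZ.injOn hc hc' (hleast.unique (hmm' ▸ (hZ.mapsTo hc').2.2.2))
    rw [eq_of_zIterate_eq hf hper (Or.inr hrange) (Or.inr hrange) h]
  case main.main i i' => rw [eq_of_zIterate_eq hf ha₀ hc hc' h]

theorem exists_realize_eq (hbase : Orbit f a₀ ⊆ range f ∨ a₀ ∉ range f)
    (hW : SurjOn eW W (omegaBases f a₀)) (hZ : SurjOn eZ Z (zetaReps f a₀)) (y : ℕ) :
    ∃ c : Cell, c.Admissible (IsCycleRep f) W Z (Orbit f a₀ ⊆ range f) ∧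
      c.realize f a₀ eW eZ = y := by
  obtain ⟨m, hm⟩ := exists_isLeast_orbit f y
  have hmy : y ∈ Orbit f m := mem_orbit_comm.1 hm.1
  have hleast : IsLeast (Orbit f m) m := by rwa [orbit_eq_of_mem hm.1]
  by_cases hy : y ∈ periodicPts f
  · have hper : m ∈ periodicPts f := mem_periodicPts_of_mem_orbit hf hy hm.1
    obtain ⟨i, hi, rfl⟩ := exists_iterate_eq_of_mem_periodicPts hf hper hmy
    exact ⟨cyc m (minimalPeriod f m) i, ⟨(isCycleRep_iff hf).2 ⟨hper, rfl, hleast⟩, hi⟩, rfl⟩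
  by_cases hya : y ∈ Orbit f a₀
  · rcases orbit_cases hf hya with ⟨n, rfl⟩ | ⟨n, hn⟩
    · exact ⟨main n, Or.inl (Int.natCast_nonneg n), rfl⟩
    · refine ⟨main (Int.negSucc n), Or.inr (hbase.resolve_right ?_),
        zIterate_negSucc_of_iterate hf hn⟩
      exact not_not.2 ⟨f^[n] y, by rw [← hn, iterate_succ_apply']⟩
  by_cases hω : ∃ b ∈ Orbit f y, b ∉ range f
  · obtain ⟨b, hb, hbr⟩ := hω
    obtain ⟨u, hu, rfl⟩ := hW ⟨hbr, fun h => hya (mem_orbit_trans h (mem_orbit_comm.1 hb))⟩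
    rcases orbit_cases hf (mem_orbit_comm.1 hb) with ⟨n, rfl⟩ | ⟨n, hn⟩
    · exact ⟨omega u n, hu, rfl⟩
    · exact absurd ⟨f^[n] y, by rw [← hn, iterate_succ_apply']⟩ hbr
  simp only [not_exists, not_and, not_not] at hω
  have hrange : Orbit f m ⊆ range f := by rwa [orbit_eq_of_mem hm.1]
  obtain ⟨u, hu, rfl⟩ := hZ ⟨hrange, notMem_periodicPts_of_mem_orbit hf hy hm.1,
    fun h => hya (mem_orbit_trans h hmy), hleast⟩
  obtain ⟨i, rfl⟩ := exists_zIterate_eq hf hmy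
  exact ⟨zeta u i, hu, rfl⟩

theorem realize_bijOn (ha₀ : a₀ ∉ periodicPts f) (hbase : Orbit f a₀ ⊆ range f ∨ a₀ ∉ range f)
    (hW : BijOn eW W (omegaBases f a₀)) (hZ : BijOn eZ Z (zetaReps f a₀)) :
    BijOn (realize f a₀ eW eZ) {c | c.Admissible (IsCycleRep f) W Z (Orbit f a₀ ⊆ range f)} univ :=
  ⟨fun _ _ => mem_univ _, realize_injOn hf ha₀ hW hZ,
    fun y _ => exists_realize_eq hf hbase hW.surjOn hZ.surjOn y⟩

end Realize

section Presentation

open Cell Denumerable Encodable Classical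

variable (cert : ℕ → ℕ × ℕ → Prop) (W Z : Set ℕ) (bw : Prop)

noncomputable def firstStage (x k : ℕ) : ℕ := sInf {s | cert s (x, k)}

/-- `2 * encode (x, k, s, i)` codes the `i`-th point of the cycle of length `k` with least point
`x`. Asking for the first certifying stage `s` gives each such point exactly one code, by a
bounded test. -/
def IsCycleCode : ℕ × ℕ × ℕ × ℕ → Prop
  | (x, k, s, i) => cert s (x, k) ∧ (∀ t < s, ¬ cert t (x, k)) ∧ i < k

/-- `2 * Nat.pair j i + 1` is the `i`-th point of column `j`. Column `4 * u` is the `ω`-chain `u`,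
columns `4 * u + 1` and `4 * u + 2` are the two halves of the `ℤ`-chain `u`, and column `3` is
the negative half of the main chain when that is a `ℤ`-chain. -/
def IsChainColumn (j : ℕ) : Prop :=
  (j % 4 = 0 ∧ j / 4 ∈ W) ∨ ((j % 4 = 1 ∨ j % 4 = 2) ∧ j / 4 ∈ Z) ∨ (j = 3 ∧ bw)

/-- The numbers claimed neither by a cycle nor by a column; in increasing order they form the
nonnegative half of the main chain. -/
def IsRay (n : ℕ) : Prop :=
  (n % 2 = 0 ∧ ¬ IsCycleCode cert (ofNat (ℕ × ℕ × ℕ × ℕ) (n / 2))) ∨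
    (n % 2 = 1 ∧ ¬ IsChainColumn W Z bw (n / 2).unpair.1)

def cycleCell : ℕ × ℕ × ℕ × ℕ → Cell
  | (x, k, _, i) => cyc x k i

def cycleSucc : ℕ × ℕ × ℕ × ℕ → ℕ × ℕ × ℕ × ℕ
  | (x, k, s, i) => (x, k, s, (i + 1) % k)

def columnCell (j i : ℕ) : Cell :=
  if j % 4 = 0 then omega (j / 4) i
  else if j % 4 = 1 then zeta (j / 4) i
  else if j % 4 = 2 then zeta (j / 4) (Int.negSucc i)
  else main (Int.negSucc i)

noncomputable def toCell (n : ℕ) : Cell :=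
  if IsRay cert W Z bw n then main (Nat.count (IsRay cert W Z bw) n)
  else if n % 2 = 0 then cycleCell (ofNat (ℕ × ℕ × ℕ × ℕ) (n / 2))
  else columnCell (n / 2).unpair.1 (n / 2).unpair.2

noncomputable def ofCell : Cell → ℕ
  | cyc x k i => 2 * encode (x, k, firstStage cert x k, i)
  | omega u i => 2 * Nat.pair (4 * u) i + 1
  | zeta u (Int.ofNat i) => 2 * Nat.pair (4 * u + 1) i + 1
  | zeta u (Int.negSucc i) => 2 * Nat.pair (4 * u + 2) i + 1
  | main (Int.ofNat t) => Nat.nth (IsRay cert W Z bw) t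
  | main (Int.negSucc i) => 2 * Nat.pair 3 i + 1

noncomputable def columnSucc (j i : ℕ) : ℕ :=
  if j % 4 = 0 ∨ j % 4 = 1 then 2 * Nat.pair j (i + 1) + 1
  else if i ≠ 0 then 2 * Nat.pair j (i - 1) + 1
  else if j % 4 = 2 then 2 * Nat.pair (j - 1) 0 + 1
  else Nat.nth (IsRay cert W Z bw) 0

noncomputable def punctualMap (n : ℕ) : ℕ :=
  if IsRay cert W Z bw n then Nat.nth (IsRay cert W Z bw) (Nat.count (IsRay cert W Z bw) n + 1)
  else if n % 2 = 0 then 2 * encode (cycleSucc (ofNat (ℕ × ℕ × ℕ × ℕ) (n / 2)))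
  else columnSucc cert W Z bw (n / 2).unpair.1 (n / 2).unpair.2

variable {cert W Z bw}

theorem firstStage_eq {x k s : ℕ} (hs : cert s (x, k)) (hmin : ∀ t < s, ¬ cert t (x, k)) :
    firstStage cert x k = s :=
  le_antisymm (Nat.sInf_le hs)
    (not_lt.1 fun h => hmin _ h (Nat.sInf_mem (s := {s | cert s (x, k)}) ⟨s, hs⟩))

theorem isCycleCode_firstStage {x k i : ℕ} (h : ∃ s, cert s (x, k)) (hi : i < k) :
    IsCycleCode cert (x, k, firstStage cert x k, i) :=
  ⟨Nat.sInf_mem h, fun _ ht => Nat.notMem_of_lt_sInf ht, hi⟩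

theorem isRay_column_seven (i : ℕ) : IsRay cert W Z bw (2 * Nat.pair 7 i + 1) := by
  refine Or.inr ⟨by omega, ?_⟩
  rw [show (2 * Nat.pair 7 i + 1) / 2 = Nat.pair 7 i by omega, Nat.unpair_pair]
  simp [IsChainColumn]

theorem strictMono_column_seven : StrictMono fun i => 2 * Nat.pair 7 i + 1 :=
  fun _ _ h => by simp only; have := Nat.pair_lt_pair_right 7 h; omega

theorem isRay_infinite : (Set.ofPred (IsRay cert W Z bw)).Infinite :=
  Set.infinite_of_injective_forall_mem strictMono_column_seven.injective isRay_column_seven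

theorem nth_isRay_le (t : ℕ) : Nat.nth (IsRay cert W Z bw) t ≤ 2 * Nat.pair 7 t + 1 :=
  Nat.nth_le_of_strictMonoOn_of_mapsTo _ (fun n _ => isRay_column_seven n)
    (strictMono_column_seven.strictMonoOn _)

theorem not_isRay_two_mul {q : ℕ × ℕ × ℕ × ℕ} (hq : IsCycleCode cert q) :
    ¬ IsRay cert W Z bw (2 * encode q) := by
  rintro (⟨-, h⟩ | ⟨h, -⟩)
  · rw [show 2 * encode q / 2 = encode q by omega, ofNat_encode] at h
    exact h hq
  · omega

theorem not_isRay_column {j : ℕ} (hj : IsChainColumn W Z bw j) (i : ℕ) :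
    ¬ IsRay cert W Z bw (2 * Nat.pair j i + 1) := by
  rintro (⟨h, -⟩ | ⟨-, h⟩)
  · omega
  · rw [show (2 * Nat.pair j i + 1) / 2 = Nat.pair j i by omega, Nat.unpair_pair] at h
    exact h hj

theorem isRay_or_cycle_or_column (n : ℕ) :
    IsRay cert W Z bw n ∨ (∃ q, IsCycleCode cert q ∧ n = 2 * encode q) ∨
      ∃ j i, IsChainColumn W Z bw j ∧ n = 2 * Nat.pair j i + 1 := by
  by_contra! ⟨hr, hcyc, hcol⟩
  rcases Nat.mod_two_eq_zero_or_one n with h | h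
  · refine hcyc _ (not_not.1 fun hq => hr (Or.inl ⟨h, hq⟩)) ?_
    rw [encode_ofNat]
    omega
  · refine hcol _ (n / 2).unpair.2 (not_not.1 fun hj => hr (Or.inr ⟨h, hj⟩)) ?_
    rw [Nat.pair_unpair]
    omega

theorem toCell_of_isRay {n : ℕ} (h : IsRay cert W Z bw n) :
    toCell cert W Z bw n = main (Nat.count (IsRay cert W Z bw) n) := by
  rw [toCell, if_pos h]

theorem toCell_two_mul {q : ℕ × ℕ × ℕ × ℕ} (hq : IsCycleCode cert q) :
    toCell cert W Z bw (2 * encode q) = cycleCell q := by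
  rw [toCell, if_neg (not_isRay_two_mul hq), if_pos (by omega),
    show 2 * encode q / 2 = encode q by omega, ofNat_encode]

theorem toCell_column {j : ℕ} (hj : IsChainColumn W Z bw j) (i : ℕ) :
    toCell cert W Z bw (2 * Nat.pair j i + 1) = columnCell j i := by
  rw [toCell, if_neg (not_isRay_column hj i), if_neg (by omega),
    show (2 * Nat.pair j i + 1) / 2 = Nat.pair j i by omega, Nat.unpair_pair]

theorem punctualMap_of_isRay {n : ℕ} (h : IsRay cert W Z bw n) :
    punctualMap cert W Z bw n =
      Nat.nth (IsRay cert W Z bw) (Nat.count (IsRay cert W Z bw) n + 1) := by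
  rw [punctualMap, if_pos h]

theorem punctualMap_two_mul {q : ℕ × ℕ × ℕ × ℕ} (hq : IsCycleCode cert q) :
    punctualMap cert W Z bw (2 * encode q) = 2 * encode (cycleSucc q) := by
  rw [punctualMap, if_neg (not_isRay_two_mul hq), if_pos (by omega),
    show 2 * encode q / 2 = encode q by omega, ofNat_encode]

theorem punctualMap_column {j : ℕ} (hj : IsChainColumn W Z bw j) (i : ℕ) :
    punctualMap cert W Z bw (2 * Nat.pair j i + 1) = columnSucc cert W Z bw j i := by
  rw [punctualMap, if_neg (not_isRay_column hj i), if_neg (by omega),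
    show (2 * Nat.pair j i + 1) / 2 = Nat.pair j i by omega, Nat.unpair_pair]

theorem ofCell_cycleCell {q : ℕ × ℕ × ℕ × ℕ} (hq : IsCycleCode cert q) :
    ofCell cert W Z bw (cycleCell q) = 2 * encode q := by
  obtain ⟨x, k, s, i⟩ := q
  rw [cycleCell, ofCell, firstStage_eq hq.1 hq.2.1]

theorem ofCell_next_cycleCell {q : ℕ × ℕ × ℕ × ℕ} (hq : IsCycleCode cert q) :
    ofCell cert W Z bw (cycleCell q).next = 2 * encode (cycleSucc q) := by
  obtain ⟨x, k, s, i⟩ := q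
  rw [cycleCell, next, ofCell, firstStage_eq hq.1 hq.2.1, cycleSucc]

theorem ofCell_columnCell {j : ℕ} (hj : IsChainColumn W Z bw j) (i : ℕ) :
    ofCell cert W Z bw (columnCell j i) = 2 * Nat.pair j i + 1 := by
  unfold columnCell
  split_ifs with h0 h1 h2
  · rw [ofCell, show 4 * (j / 4) = j by omega]
  · rw [show ((i : ℤ)) = Int.ofNat i from rfl, ofCell, show 4 * (j / 4) + 1 = j by omega]
  · rw [ofCell, show 4 * (j / 4) + 2 = j by omega]
  · rw [ofCell, show j = 3 by unfold IsChainColumn at hj; omega]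

theorem ofCell_next_columnCell {j : ℕ} (hj : IsChainColumn W Z bw j) (i : ℕ) :
    ofCell cert W Z bw (columnCell j i).next = columnSucc cert W Z bw j i := by
  rcases (by omega : j % 4 = 0 ∨ j % 4 = 1 ∨ j % 4 = 2 ∨ j % 4 = 3) with h | h | h | h
  · rw [columnCell, if_pos h, columnSucc, if_pos (Or.inl h), next, ofCell,
      show 4 * (j / 4) = j by omega]
  · rw [columnCell, if_neg (by omega), if_pos h, columnSucc, if_pos (Or.inr h), next,
      show (i : ℤ) + 1 = Int.ofNat (i + 1) from rfl, ofCell, show 4 * (j / 4) + 1 = j by omega]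
  · rw [columnCell, if_neg (by omega), if_neg (by omega), if_pos h, columnSucc,
      if_neg (by omega), next]
    rcases i with _ | i
    · rw [if_neg (not_not.2 rfl), if_pos h, show Int.negSucc 0 + 1 = Int.ofNat 0 from rfl, ofCell,
        show 4 * (j / 4) + 1 = j - 1 by omega]
    · rw [if_pos (Nat.succ_ne_zero i), show Int.negSucc (i + 1) + 1 = Int.negSucc i from rfl,
        ofCell, show 4 * (j / 4) + 2 = j by omega, Nat.add_sub_cancel]
  · obtain rfl : j = 3 := by unfold IsChainColumn at hj; omega
    rw [columnCell, if_neg (by omega), if_neg (by omega), if_neg (by omega), columnSucc,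
      if_neg (by omega), next]
    rcases i with _ | i
    · rw [if_neg (not_not.2 rfl), if_neg (by omega), show Int.negSucc 0 + 1 = Int.ofNat 0 from rfl,
        ofCell]
    · rw [if_pos (Nat.succ_ne_zero i), show Int.negSucc (i + 1) + 1 = Int.negSucc i from rfl,
        ofCell, Nat.add_sub_cancel]

theorem ofCell_toCell (n : ℕ) : ofCell cert W Z bw (toCell cert W Z bw n) = n := by
  rcases isRay_or_cycle_or_column n with hr | ⟨q, hq, rfl⟩ | ⟨j, i, hj, rfl⟩
  · rw [toCell_of_isRay hr]
    exact Nat.nth_count hr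
  · rw [toCell_two_mul hq, ofCell_cycleCell hq]
  · rw [toCell_column hj, ofCell_columnCell hj]

theorem punctualMap_eq (n : ℕ) :
    punctualMap cert W Z bw n = ofCell cert W Z bw (toCell cert W Z bw n).next := by
  rcases isRay_or_cycle_or_column n with hr | ⟨q, hq, rfl⟩ | ⟨j, i, hj, rfl⟩
  · rw [punctualMap_of_isRay hr, toCell_of_isRay hr]
    rfl
  · rw [punctualMap_two_mul hq, toCell_two_mul hq, ofCell_next_cycleCell hq]
  · rw [punctualMap_column hj, toCell_column hj, ofCell_next_columnCell hj]

theorem primrecPred_mod_eq (m r : ℕ) : PrimrecPred fun j : ℕ => j % m = r :=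
  Primrec.eq.comp (Primrec.nat_mod.comp .id (.const m)) (.const r)

theorem primrec_column : Primrec₂ fun j i : ℕ => 2 * Nat.pair j i + 1 :=
  Primrec.succ.comp (Primrec.nat_mul.comp (.const 2) Primrec₂.natPair)

open Primrec in
theorem primrecPred_isCycleCode (hcert : PrimrecRel cert) : PrimrecPred (IsCycleCode cert) :=
  have hxk : Primrec fun q : ℕ × ℕ × ℕ × ℕ => (q.1, q.2.1) := fst.pair (fst.comp snd)
  have hs : Primrec fun q : ℕ × ℕ × ℕ × ℕ => q.2.2.1 := fst.comp (snd.comp snd)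
  ((hcert.comp hs hxk).and (((PrimrecRel.forall_mem_list hcert.not).comp
    (list_range.comp hs) hxk).and (nat_lt.comp (snd.comp (snd.comp snd)) (fst.comp snd)))).of_eq
    fun ⟨_, _, _, _⟩ => by simp only [List.mem_range, IsCycleCode]

open Primrec in
theorem primrecPred_isChainColumn (hW : PrimrecPred (· ∈ W)) (hZ : PrimrecPred (· ∈ Z)) :
    PrimrecPred (IsChainColumn W Z bw) :=
  have hquot : Primrec fun j : ℕ => j / 4 := nat_div.comp .id (const 4)
  ((primrecPred_mod_eq 4 0).and (hW.comp hquot)).or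
    ((((primrecPred_mod_eq 4 1).or (primrecPred_mod_eq 4 2)).and (hZ.comp hquot)).or
      ((Primrec.eq.comp .id (const 3)).and
        (Primrec.primrecPred (p := fun _ : ℕ => bw) (const (decide bw)))))

open Primrec in
theorem primrecPred_isRay (hcert : PrimrecRel cert) (hW : PrimrecPred (· ∈ W))
    (hZ : PrimrecPred (· ∈ Z)) : PrimrecPred (IsRay cert W Z bw) :=
  have hhalf : Primrec fun n : ℕ => n / 2 := nat_div.comp .id (const 2)
  ((primrecPred_mod_eq 2 0).and
    ((primrecPred_isCycleCode hcert).comp ((Primrec.ofNat _).comp hhalf)).not).or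
  ((primrecPred_mod_eq 2 1).and
    ((primrecPred_isChainColumn hW hZ).comp (fst.comp (unpair.comp hhalf))).not)

open Primrec in
theorem primrec_cycleSucc : Primrec cycleSucc :=
  (fst.pair ((fst.comp snd).pair ((fst.comp (snd.comp snd)).pair
    (nat_mod.comp (succ.comp (snd.comp (snd.comp snd))) (fst.comp snd))))).of_eq
    fun ⟨_, _, _, _⟩ => rfl

open Primrec in
theorem primrec_columnSucc : Primrec₂ (columnSucc cert W Z bw) :=
  ite (((primrecPred_mod_eq 4 0).or (primrecPred_mod_eq 4 1)).comp fst)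
    (primrec_column.comp fst (succ.comp snd))
    (ite (Primrec.eq.comp snd (const 0)).not (primrec_column.comp fst (nat_sub.comp snd (const 1)))
      (ite ((primrecPred_mod_eq 4 2).comp fst) (primrec_column.comp (nat_sub.comp fst (const 1))
        (const 0)) (const _)))

open Primrec in
theorem primrec_punctualMap (hcert : PrimrecRel cert) (hW : PrimrecPred (· ∈ W))
    (hZ : PrimrecPred (· ∈ Z)) : Primrec (punctualMap cert W Z bw) :=
  have hhalf : Primrec fun n : ℕ => n / 2 := nat_div.comp .id (const 2)
  have hray := primrecPred_isRay (bw := bw) hcert hW hZ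
  have hnth : Primrec (Nat.nth (IsRay cert W Z bw)) :=
    nat_nth hray isRay_infinite (primrec_column.comp (const 7) .id) nth_isRay_le
  ite hray (hnth.comp (succ.comp (nat_count hray)))
    (ite (primrecPred_mod_eq 2 0) (nat_mul.comp (const 2) (Primrec.encode.comp
      (primrec_cycleSucc.comp ((Primrec.ofNat _).comp hhalf))))
      (primrec_columnSucc.comp (fst.comp (unpair.comp hhalf)) (snd.comp (unpair.comp hhalf))))

variable {Rep : ℕ → ℕ → Prop} (hRep : ∀ x k, Rep x k ↔ ∃ s, cert s (x, k))
include hRep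

theorem toCell_admissible (n : ℕ) : (toCell cert W Z bw n).Admissible Rep W Z bw := by
  rcases isRay_or_cycle_or_column n with hr | ⟨⟨x, k, s, i⟩, hq, rfl⟩ | ⟨j, i, hj, rfl⟩
  · rw [toCell_of_isRay hr]
    exact Or.inl (Int.natCast_nonneg _)
  · rw [toCell_two_mul hq]
    exact ⟨(hRep x k).2 ⟨s, hq.1⟩, hq.2.2⟩
  · rw [toCell_column hj, columnCell]
    rcases hj with ⟨h, hW⟩ | ⟨h | h, hZ⟩ | ⟨rfl, hbw⟩
    · rw [if_pos h]
      exact hW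
    · rw [if_neg (by omega), if_pos h]
      exact hZ
    · rw [if_neg (by omega), if_neg (by omega), if_pos h]
      exact hZ
    · rw [if_neg (by omega), if_neg (by omega), if_neg (by omega)]
      exact Or.inr hbw

theorem toCell_ofCell {c : Cell} (hc : c.Admissible Rep W Z bw) :
    toCell cert W Z bw (ofCell cert W Z bw c) = c := by
  cases c with
  | cyc x k i =>
    rw [ofCell, toCell_two_mul (isCycleCode_firstStage ((hRep x k).1 hc.1) hc.2)]
    rfl
  | omega u i =>
    rw [ofCell, toCell_column (Or.inl ⟨by omega, by rwa [show 4 * u / 4 = u by omega]⟩),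
      columnCell, if_pos (by omega), show 4 * u / 4 = u by omega]
  | zeta u i =>
    have hcol : ∀ r, (r = 1 ∨ r = 2) → IsChainColumn W Z bw (4 * u + r) := fun r hr =>
      Or.inr (Or.inl ⟨by omega, by rwa [show (4 * u + r) / 4 = u by omega]⟩)
    rcases i with i | i
    · rw [ofCell, toCell_column (hcol 1 (Or.inl rfl)), columnCell, if_neg (by omega),
        if_pos (by omega), show (4 * u + 1) / 4 = u by omega]
      rfl
    · rw [ofCell, toCell_column (hcol 2 (Or.inr rfl)), columnCell, if_neg (by omega),
        if_neg (by omega), if_pos (by omega), show (4 * u + 2) / 4 = u by omega]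
  | main i =>
    rcases i with t | i
    · rw [ofCell, toCell_of_isRay (Nat.nth_mem_of_infinite isRay_infinite t),
        Nat.count_nth_of_infinite isRay_infinite]
      rfl
    · have hbw : bw := hc.resolve_left (Int.negSucc_lt_zero i).not_ge
      rw [ofCell, toCell_column (Or.inr (Or.inr ⟨rfl, hbw⟩)), columnCell, if_neg (by omega),
        if_neg (by omega), if_neg (by omega)]

theorem toCell_bijOn : BijOn (toCell cert W Z bw) univ {c | c.Admissible Rep W Z bw} :=
  InvOn.bijOn ⟨fun n _ => ofCell_toCell n, fun _ hc => toCell_ofCell hRep hc⟩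
    (fun n _ => toCell_admissible hRep n) (fun _ _ => mem_univ _)

theorem toCell_punctualMap (n : ℕ) :
    toCell cert W Z bw (punctualMap cert W Z bw n) = (toCell cert W Z bw n).next := by
  rw [punctualMap_eq, toCell_ofCell hRep (toCell_admissible hRep n).next]

end Presentation

/-- Every computable injection structure with at least one infinite orbit has a
punctual presentation. -/
theorem punctual_presentation_of_infinite_orbit (f : ℕ → ℕ)
    (hinj : Function.Injective f) (hcomp : Computable f)
    (hinf : ∃ a : ℕ, (Orbit f a).Infinite) :
    ∃ g φ : ℕ → ℕ, Primrec g ∧ Function.Injective g ∧ Function.Bijective φ ∧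
      ∀ n : ℕ, φ (f n) = g (φ n) := by
  obtain ⟨a, ha⟩ := hinf
  obtain ⟨a₀, ha₀, hbase⟩ := exists_start_of_infinite_orbit hinj ha
  obtain ⟨cert, hcert, hRep⟩ := (computablePred_isCycleRep hcomp).to_re.exists_primrecRel
  obtain ⟨W, eW, hWp, hW⟩ := exists_primrecPred_bijOn (omegaBases f a₀)
  obtain ⟨Z, eZ, hZp, hZ⟩ := exists_primrecPred_bijOn (zetaReps f a₀)
  set bw := Orbit f a₀ ⊆ range f
  set g := punctualMap cert W Z bw
  set χ := Cell.realize f a₀ eW eZ ∘ toCell cert W Z bw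
  have hRep' : ∀ x k, IsCycleRep f x k ↔ ∃ s, cert s (x, k) := fun x k => hRep (x, k)
  have hχ : Bijective χ :=
    bijOn_univ.1 ((realize_bijOn hinj ha₀ hbase hW hZ).comp (toCell_bijOn hRep'))
  have hχg : Semiconj χ g f := fun n => by
    simp only [χ, g, comp_apply, toCell_punctualMap hRep']
    exact realize_next hZ.mapsTo (toCell_admissible hRep' n)
  let φ := (Equiv.ofBijective χ hχ).symm
  refine ⟨g, φ, primrec_punctualMap hcert hWp hZp, ?_, φ.bijective,
    hχg.inverse_left φ.right_inv φ.left_inv⟩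
  refine Injective.of_comp (f := χ) ?_
  rw [semiconj_iff_comp_eq.1 hχg]
  exact hinj.comp hχ.1
end

section
/- Let c : Nat.Partrec.Code and g : ℕ → ℕ satisfy: for every x : ℕ there is s : ℕ with Nat.Partrec.Code.evaln s c x = some (g x). Then there exists an injective primitive recursive function f_B : ℕ → ℕ with at least one infinite orbit and infinitely many finite orbits, any two distinct finite orbits having different cardinalities, such that for every x : ℕ and every b : ℕ whose orbit O_{f_B}(b) is finite and such that exactly x finite orbits of f_B have cardinality strictly smaller than that of O_{f_B}(b), one has Nat.Partrec.Code.evaln (b + 1) c x = some (g x). (The x-th finite orbit of the punctual structure appears only after g(x) has converged.) -/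
/-!
Lay out `ℕ` in columns, `Nat.pair y i` being the `i`-th entry of column `y`. Every entry moves up
its column, except that in the column `y = Nat.pair x t`, where `t` is the step at which `evaln`
first converges on `c, x`, the entries `i ≤ x` are closed into a cycle of length `x + 1`. Recognising
the first convergence step is primitive recursive, so this map is punctual; its finite orbits are
exactly these cycles, and every element of the `x`-th one is at least `Nat.pair x t ≥ t`, so it
only appears after `c` has converged on `x`.
-/

open Nat.Partrec Nat.Partrec.Code

section ColumnShift

variable (D : ℕ → Prop) [DecidablePred D] (ℓ : ℕ → ℕ)

def columnShift (n : ℕ) : ℕ :=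
  if D n.unpair.1 ∧ n.unpair.2 = ℓ n.unpair.1 then Nat.pair n.unpair.1 0
  else Nat.pair n.unpair.1 (n.unpair.2 + 1)

def columnCycle (y : ℕ) : Set ℕ := Nat.pair y '' Set.Iic (ℓ y)

variable {D ℓ}

theorem columnShift_pair (y i : ℕ) :
    columnShift D ℓ (Nat.pair y i) =
      if D y ∧ i = ℓ y then Nat.pair y 0 else Nat.pair y (i + 1) := by
  simp only [columnShift, Nat.unpair_pair]

theorem primrec_columnShift (hD : PrimrecPred D) (hℓ : Primrec ℓ) :
    Primrec (columnShift D ℓ) := by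
  have hy : Primrec fun n : ℕ => n.unpair.1 := Primrec.fst.comp Primrec.unpair
  have hi : Primrec fun n : ℕ => n.unpair.2 := Primrec.snd.comp Primrec.unpair
  exact Primrec.ite ((hD.comp hy).and (Primrec.eq.comp hi (hℓ.comp hy)))
    (Primrec₂.natPair.comp hy (Primrec.const 0))
    (Primrec₂.natPair.comp hy (Primrec.succ.comp hi))

theorem columnShift_injective : Function.Injective (columnShift D ℓ) := by
  intro m n h
  rw [← Nat.pair_unpair m, ← Nat.pair_unpair n] at h ⊢
  simp only [columnShift_pair] at h
  split_ifs at h <;> grind [Nat.pair_eq_pair]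

theorem iterate_columnShift_pair {y i n : ℕ} (h : ∀ k < n, ¬(D y ∧ i + k = ℓ y)) :
    (columnShift D ℓ)^[n] (Nat.pair y i) = Nat.pair y (i + n) := by
  induction n with
  | zero => rfl
  | succ n ih =>
    rw [Function.iterate_succ_apply', ih fun k hk => h k (by omega), columnShift_pair,
      if_neg (h n n.lt_succ_self), Nat.add_assoc]

theorem iterate_columnShift_eq_pair_zero {y i : ℕ} (hD : D y) (hi : i ≤ ℓ y) :
    (columnShift D ℓ)^[ℓ y + 1 - i] (Nat.pair y i) = Nat.pair y 0 := by
  rw [show ℓ y + 1 - i = ℓ y - i + 1 by omega, Function.iterate_succ_apply',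
    iterate_columnShift_pair fun k hk ⟨_, hk'⟩ => by omega, Nat.add_sub_cancel' hi,
    columnShift_pair, if_pos ⟨hD, rfl⟩]

theorem pair_mem_columnCycle {y y' j : ℕ} :
    Nat.pair y' j ∈ columnCycle ℓ y ↔ y' = y ∧ j ≤ ℓ y := by
  simp only [columnCycle, Set.mem_image, Set.mem_Iic, Nat.pair_eq_pair]
  constructor
  · rintro ⟨_, hj, rfl, rfl⟩
    exact ⟨rfl, hj⟩
  · rintro ⟨rfl, hj⟩
    exact ⟨j, hj, rfl, rfl⟩

theorem columnShift_mem_columnCycle_iff {y n : ℕ} (hD : D y) :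
    columnShift D ℓ n ∈ columnCycle ℓ y ↔ n ∈ columnCycle ℓ y := by
  rw [← Nat.pair_unpair n, columnShift_pair]
  split_ifs <;> grind [pair_mem_columnCycle]

theorem iterate_columnShift_mem_columnCycle_iff {y : ℕ} (hD : D y) (k : ℕ) {n : ℕ} :
    (columnShift D ℓ)^[k] n ∈ columnCycle ℓ y ↔ n ∈ columnCycle ℓ y := by
  induction k with
  | zero => rfl
  | succ k ih => rw [Function.iterate_succ_apply', columnShift_mem_columnCycle_iff hD, ih]

theorem orbit_columnShift_of_le {y i : ℕ} (hD : D y) (hi : i ≤ ℓ y) :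
    Orbit (columnShift D ℓ) (Nat.pair y i) = columnCycle ℓ y := by
  ext b
  constructor
  · rintro ⟨m, n, hmn⟩
    rw [← iterate_columnShift_mem_columnCycle_iff hD n, ← hmn,
      iterate_columnShift_mem_columnCycle_iff hD m]
    exact pair_mem_columnCycle.2 ⟨rfl, hi⟩
  · rintro ⟨j, hj, rfl⟩
    exact ⟨ℓ y + 1 - i, ℓ y + 1 - j, by
      rw [iterate_columnShift_eq_pair_zero hD hi, iterate_columnShift_eq_pair_zero hD hj]⟩

theorem orbit_columnShift_infinite {y i : ℕ} (h : ¬(D y ∧ i ≤ ℓ y)) :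
    (Orbit (columnShift D ℓ) (Nat.pair y i)).Infinite := by
  have hit (n : ℕ) : (columnShift D ℓ)^[n] (Nat.pair y i) = Nat.pair y (i + n) :=
    iterate_columnShift_pair fun k _ hk => h ⟨hk.1, by omega⟩
  refine Set.infinite_of_injective_forall_mem (f := fun n => Nat.pair y (i + n))
    (fun m n hmn => ?_) fun n => ⟨n, 0, hit n⟩
  simpa [Nat.pair_eq_pair] using hmn

theorem exists_orbit_columnShift_infinite : ∃ a, (Orbit (columnShift D ℓ) a).Infinite :=
  ⟨Nat.pair 0 (ℓ 0 + 1), orbit_columnShift_infinite fun h => by omega⟩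

theorem setOf_finite_orbit_columnShift :
    {O : Set ℕ | (∃ a, O = Orbit (columnShift D ℓ) a) ∧ O.Finite} =
      columnCycle ℓ '' {y | D y} := by
  ext O
  constructor
  · rintro ⟨⟨a, rfl⟩, hfin⟩
    rw [← Nat.pair_unpair a] at hfin ⊢
    by_cases h : D a.unpair.1 ∧ a.unpair.2 ≤ ℓ a.unpair.1
    · exact ⟨_, h.1, (orbit_columnShift_of_le h.1 h.2).symm⟩
    · exact absurd hfin (orbit_columnShift_infinite h)
  · rintro ⟨y, hy, rfl⟩
    exact ⟨⟨Nat.pair y 0, (orbit_columnShift_of_le hy (Nat.zero_le _)).symm⟩,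
      (Set.finite_Iic _).image _⟩

theorem le_of_mem_columnCycle {y n : ℕ} (h : n ∈ columnCycle ℓ y) : y ≤ n := by
  obtain ⟨j, -, rfl⟩ := h
  exact Nat.left_le_pair y j

variable (ℓ) in
theorem ncard_columnCycle (y : ℕ) : (columnCycle ℓ y).ncard = ℓ y + 1 := by
  rw [columnCycle, Set.ncard_image_of_injective _ fun a b h => (Nat.pair_eq_pair.1 h).2,
    Set.ncard_Iic_nat]

end ColumnShift

def HaltsFirstAt (c : Code) (x t : ℕ) : Prop :=
  ¬(evaln t c x).isSome ∧ (evaln (t + 1) c x).isSome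

instance (c : Code) (x t : ℕ) : Decidable (HaltsFirstAt c x t) :=
  inferInstanceAs (Decidable (_ ∧ _))

theorem primrecPred_haltsFirstAt (c : Code) :
    PrimrecPred fun y : ℕ => HaltsFirstAt c y.unpair.1 y.unpair.2 := by
  have hy : Primrec fun y : ℕ => y.unpair.1 := Primrec.fst.comp Primrec.unpair
  have hi : Primrec fun y : ℕ => y.unpair.2 := Primrec.snd.comp Primrec.unpair
  have hs {s : ℕ → ℕ} (hs : Primrec s) :
      PrimrecPred fun y : ℕ => (evaln (s y) c y.unpair.1).isSome :=
    Primrec.primrecPred ((Primrec.option_isSome.comp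
      (primrec_evaln.comp ((hs.pair (Primrec.const c)).pair hy))).of_eq fun y => by simp)
  exact (hs hi).not.and (hs (Primrec.succ.comp hi))

theorem exists_haltsFirstAt {c : Code} {x v : ℕ} (h : ∃ s, evaln s c x = some v) :
    ∃ t, HaltsFirstAt c x t := by
  classical
  have hex : ∃ s, (evaln s c x).isSome := h.imp fun s hs => by simp [hs]
  have hpos : Nat.find hex ≠ 0 := fun h0 => by
    simpa [h0, evaln] using Nat.find_spec hex
  refine ⟨Nat.find hex - 1, Nat.find_min hex (by omega), ?_⟩
  rw [Nat.sub_add_cancel (Nat.pos_of_ne_zero hpos)]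
  exact Nat.find_spec hex

theorem HaltsFirstAt.isSome_evaln {c : Code} {x t s : ℕ} (h : HaltsFirstAt c x t) (hts : t < s) :
    (evaln s c x).isSome := by
  obtain ⟨v, hv⟩ := Option.isSome_iff_exists.1 h.2
  exact Option.isSome_iff_exists.2 ⟨v, evaln_mono hts hv⟩

theorem HaltsFirstAt.unique {c : Code} {x t t' : ℕ} (h : HaltsFirstAt c x t)
    (h' : HaltsFirstAt c x t') : t = t' := by
  by_contra hne
  rcases Nat.lt_or_gt_of_ne hne with hlt | hlt
  · exact h'.1 (h.isSome_evaln hlt)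
  · exact h.1 (h'.isSome_evaln hlt)

theorem HaltsFirstAt.evaln_eq_some {c : Code} {x t s v : ℕ} (h : HaltsFirstAt c x t)
    (hv : ∃ s', evaln s' c x = some v) (hts : t < s) : evaln s c x = some v := by
  obtain ⟨w, hw⟩ := Option.isSome_iff_exists.1 (h.isSome_evaln hts)
  obtain ⟨s', hs'⟩ := hv
  rw [hw, Part.mem_unique (evaln_sound hw) (evaln_sound hs')]

theorem setOf_haltsFirstAt_eq_range {c : Code} {t : ℕ → ℕ} (ht : ∀ x, HaltsFirstAt c x (t x)) :
    {y : ℕ | HaltsFirstAt c y.unpair.1 y.unpair.2} = Set.range fun x => Nat.pair x (t x) := by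
  ext y
  constructor
  · intro hy
    exact ⟨y.unpair.1, show Nat.pair _ (t _) = y by rw [(ht _).unique hy, Nat.pair_unpair]⟩
  · rintro ⟨x, rfl⟩
    show HaltsFirstAt c _ _
    simpa only [Nat.unpair_pair] using ht x

section NcardFamily

variable {α : Type*} {F : ℕ → Set α}

theorem injective_of_ncard_eq_succ (hF : ∀ x, (F x).ncard = x + 1) : F.Injective :=
  fun a b h => by simpa [hF] using congrArg Set.ncard h

theorem ncard_ne_of_mem_range (hF : ∀ x, (F x).ncard = x + 1) {O O' : Set α}
    (hO : O ∈ Set.range F) (hO' : O' ∈ Set.range F) (hne : O ≠ O') : O.ncard ≠ O'.ncard := by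
  obtain ⟨x, rfl⟩ := hO
  obtain ⟨y, rfl⟩ := hO'
  rw [hF, hF]
  exact fun h => hne (by rw [Nat.succ_inj.1 h])

theorem ncard_setOf_mem_range_ncard_lt (hF : ∀ x, (F x).ncard = x + 1) (n : ℕ) :
    {O | O ∈ Set.range F ∧ O.ncard < n + 1}.ncard = n := by
  have hset : {O | O ∈ Set.range F ∧ O.ncard < n + 1} = F '' Set.Iio n := by
    ext O
    constructor
    · rintro ⟨⟨x, rfl⟩, hx⟩
      exact ⟨x, by simpa [hF] using hx, rfl⟩
    · rintro ⟨x, hx, rfl⟩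
      exact ⟨⟨x, rfl⟩, by simpa [hF] using hx⟩
  rw [hset, Set.ncard_image_of_injective _ (injective_of_ncard_eq_succ hF), Set.ncard_Iio_nat]

end NcardFamily

theorem punctual_copy_delays_finite_orbits (c : Nat.Partrec.Code) (g : ℕ → ℕ)
    (hg : ∀ x : ℕ, ∃ s : ℕ, Nat.Partrec.Code.evaln s c x = some (g x)) :
    ∃ fB : ℕ → ℕ,
      Primrec fB ∧ Function.Injective fB ∧
      (∃ a : ℕ, (Orbit fB a).Infinite) ∧
      {O : Set ℕ | (∃ a : ℕ, O = Orbit fB a) ∧ O.Finite}.Infinite ∧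
      (∀ a b : ℕ, (Orbit fB a).Finite → (Orbit fB b).Finite →
        Orbit fB a ≠ Orbit fB b → (Orbit fB a).ncard ≠ (Orbit fB b).ncard) ∧
      (∀ x b : ℕ, (Orbit fB b).Finite →
        {O : Set ℕ | (∃ a : ℕ, O = Orbit fB a) ∧ O.Finite ∧
          O.ncard < (Orbit fB b).ncard}.Finite →
        {O : Set ℕ | (∃ a : ℕ, O = Orbit fB a) ∧ O.Finite ∧
          O.ncard < (Orbit fB b).ncard}.ncard = x →
        Nat.Partrec.Code.evaln (b + 1) c x = some (g x)) := by
  let ℓ : ℕ → ℕ := fun y => y.unpair.1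
  let f := columnShift (fun y => HaltsFirstAt c y.unpair.1 y.unpair.2) ℓ
  choose t ht using fun x => exists_haltsFirstAt (hg x)
  let F : ℕ → Set ℕ := fun x => columnCycle ℓ (Nat.pair x (t x))
  have hF (x : ℕ) : (F x).ncard = x + 1 := by simp [F, ℓ, ncard_columnCycle]
  have hfin (O : Set ℕ) : ((∃ a, O = Orbit f a) ∧ O.Finite) ↔ O ∈ Set.range F := by
    rw [← Set.mem_ofPred (p := fun O => (∃ a, O = Orbit f a) ∧ O.Finite),
      setOf_finite_orbit_columnShift, setOf_haltsFirstAt_eq_range ht, ← Set.range_comp]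
    rfl
  refine ⟨f, primrec_columnShift (primrecPred_haltsFirstAt c) (Primrec.fst.comp Primrec.unpair),
    columnShift_injective, exists_orbit_columnShift_infinite, ?_, ?_, ?_⟩
  · simp only [hfin, Set.ofPred_mem_eq]
    exact Set.infinite_range_of_injective (injective_of_ncard_eq_succ hF)
  · exact fun a b ha hb => ncard_ne_of_mem_range hF ((hfin _).1 ⟨⟨a, rfl⟩, ha⟩)
      ((hfin _).1 ⟨⟨b, rfl⟩, hb⟩)
  · intro x b hb _ hcount
    obtain ⟨x₀, hx₀⟩ := (hfin _).1 ⟨⟨b, rfl⟩, hb⟩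
    simp only [← hx₀, hF, ← and_assoc, hfin] at hcount
    rw [ncard_setOf_mem_range_ncard_lt hF] at hcount
    subst hcount
    have hb₀ : b ∈ F x₀ := hx₀ ▸ ⟨0, 0, rfl⟩
    refine (ht x₀).evaln_eq_some (hg x₀) ?_
    have := Nat.right_le_pair x₀ (t x₀)
    have := le_of_mem_columnCycle hb₀
    omega
end

section
/- Let g : ℕ → ℕ and let g* : ℕ → ℕ → ℕ be primitive recursive (Primrec₂ g*) such that for every x there is s₀ with g* x s = g x for all s ≥ s₀ (g is the limit of the primitive recursive approximation g*). Then there exist injective primitive recursive functions f_A, f_B : ℕ → ℕ and an injective primitive recursive function a : ℕ → ℕ such that: every orbit of f_A and every orbit of f_B is an ω-chain and f_A has infinitely many orbits; (ℕ, f_A) and (ℕ, f_B) are isomorphic; the range of a is exactly the complement of the range of f_A; and for every isomorphism h from (ℕ, f_A) to (ℕ, f_B) and every x : ℕ, g* x (max { h (a i) | i ≤ x + 1 }) = g x. (Hard direction of PRCat(A) = Cone(Δ⁰₂) for injection structures consisting of infinitely many ω-chains: any isomorphism between the constructed copies explicitly recovers the Δ⁰₂ function g.) -/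
/-- `h` is an isomorphism from the injection structure `(ℕ, f)` to `(ℕ, g)`. -/
def IsInjIso (f g h : ℕ → ℕ) : Prop :=
  Function.Bijective h ∧ ∀ n : ℕ, h (f n) = g (h n)

/-- The orbit of `a` under `f` is an ω-chain: an infinite orbit containing an
element outside the range of `f`. -/
def IsOmegaChain (f : ℕ → ℕ) (a : ℕ) : Prop :=
  (Orbit f a).Infinite ∧ ∃ b ∈ Orbit f a, b ∉ Set.range f

theorem IsInjIso.apply_notMem_range {f g h : ℕ → ℕ} (hh : IsInjIso f g h) {n : ℕ}
    (hn : n ∉ Set.range f) : h n ∉ Set.range g := by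
  rintro ⟨y, hy⟩
  obtain ⟨y, rfl⟩ := hh.1.2 y
  exact hn ⟨y, hh.1.1 (by rw [hh.2, hy])⟩

namespace InjectionStructure

open Function

def omegaSucc (n : ℕ) : ℕ := Nat.pair n.unpair.1 (n.unpair.2 + 1)

def omegaBase (c : ℕ) : ℕ := Nat.pair c 0

theorem omegaSucc_primrec : Primrec omegaSucc :=
  Primrec₂.natPair.comp (Primrec.fst.comp Primrec.unpair)
    (Primrec.succ.comp (Primrec.snd.comp Primrec.unpair))

theorem omegaBase_primrec : Primrec omegaBase :=
  Primrec₂.natPair.comp Primrec.id (Primrec.const 0)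

theorem omegaSucc_iterate_pair (c s r : ℕ) : omegaSucc^[r] (Nat.pair c s) = Nat.pair c (s + r) := by
  induction r with
  | zero => rfl
  | succ r ih => rw [iterate_succ_apply', ih, omegaSucc, Nat.unpair_pair, Nat.add_assoc]

structure ChainBasis (f b : ℕ → ℕ) : Prop where
  injective : Injective f
  base_injective : Injective b
  base_notMem_range : ∀ j, b j ∉ Set.range f
  exists_iterate_eq : ∀ n, ∃ j r, f^[r] (b j) = n

theorem chainBasis_omegaSucc : ChainBasis omegaSucc omegaBase where
  injective m n h := by
    obtain ⟨h₁, h₂⟩ := Nat.pair_eq_pair.1 h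
    rw [← Nat.pair_unpair m, ← Nat.pair_unpair n, h₁, Nat.succ_injective h₂]
  base_injective _ _ h := (Nat.pair_eq_pair.1 h).1
  base_notMem_range c := by
    rintro ⟨n, h⟩
    exact Nat.succ_ne_zero _ (Nat.pair_eq_pair.1 h).2
  exists_iterate_eq n :=
    ⟨n.unpair.1, n.unpair.2, by rw [omegaBase, omegaSucc_iterate_pair, zero_add, Nat.pair_unpair]⟩

namespace ChainBasis

variable {f b : ℕ → ℕ}

theorem iterate_eq_iterate (hB : ChainBasis f b) {r r' j j' : ℕ}
    (h : f^[r] (b j) = f^[r'] (b j')) : r = r' ∧ j = j' := by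
  induction r generalizing r' with
  | zero =>
    cases r' with
    | zero => exact ⟨rfl, hB.base_injective h⟩
    | succ r' =>
      rw [iterate_succ_apply'] at h
      exact (hB.base_notMem_range j ⟨_, h.symm⟩).elim
  | succ r ih =>
    cases r' with
    | zero =>
      rw [iterate_succ_apply'] at h
      exact (hB.base_notMem_range j' ⟨_, h⟩).elim
    | succ r' =>
      rw [iterate_succ_apply', iterate_succ_apply'] at h
      obtain ⟨rfl, rfl⟩ := ih (hB.injective h)
      exact ⟨rfl, rfl⟩

theorem isOmegaChain (hB : ChainBasis f b) (n : ℕ) : IsOmegaChain f n := by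
  obtain ⟨j, r, rfl⟩ := hB.exists_iterate_eq n
  refine ⟨Set.infinite_of_injective_forall_mem (f := fun m => f^[m] (f^[r] (b j)))
    (fun m m' h => ?_) (fun m => ⟨m, 0, rfl⟩), b j, ⟨0, r, rfl⟩, hB.base_notMem_range j⟩
  simp only [← iterate_add_apply] at h
  exact Nat.add_right_cancel (hB.iterate_eq_iterate h).1

theorem range_eq_compl (hB : ChainBasis f b) : Set.range b = (Set.range f)ᶜ := by
  ext n
  refine ⟨?_, fun hn => ?_⟩
  · rintro ⟨j, rfl⟩
    exact hB.base_notMem_range j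
  · obtain ⟨j, r, rfl⟩ := hB.exists_iterate_eq n
    cases r with
    | zero => exact ⟨j, rfl⟩
    | succ r => exact (hn ⟨_, (iterate_succ_apply' f r (b j)).symm⟩).elim

theorem infinite_orbits (hB : ChainBasis f b) : {O : Set ℕ | ∃ n, O = Orbit f n}.Infinite := by
  refine Set.infinite_of_injective_forall_mem (f := fun j => Orbit f (b j))
    (fun j j' h => ?_) (fun j => ⟨b j, rfl⟩)
  have hmem : b j' ∈ Orbit f (b j) := (congrFun h (b j')).mpr ⟨0, 0, rfl⟩
  obtain ⟨m, k, hmk⟩ := hmem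
  exact (hB.iterate_eq_iterate hmk).2

theorem isInjIso (hB : ChainBasis f b) :
    IsInjIso omegaSucc f fun n => f^[n.unpair.2] (b n.unpair.1) := by
  refine ⟨⟨fun m n h => ?_, fun n => ?_⟩, fun n => ?_⟩
  · obtain ⟨h₂, h₁⟩ := hB.iterate_eq_iterate h
    rw [← Nat.pair_unpair m, ← Nat.pair_unpair n, h₁, h₂]
  · obtain ⟨j, r, rfl⟩ := hB.exists_iterate_eq n
    exact ⟨Nat.pair j r, by simp only [Nat.unpair_pair]⟩
  · simp only [omegaSucc, Nat.unpair_pair, iterate_succ_apply']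

end ChainBasis

theorem exists_lt_succ_le_of_injective {c : ℕ → ℕ} (hc : Injective c) (n : ℕ) :
    ∃ i < n + 1, n ≤ c i := by
  by_contra! H
  have := Finset.card_le_card_of_injOn c (s := Finset.range (n + 1)) (t := Finset.range n)
    (fun i hi => by simpa using H i (by simpa using hi)) hc.injOn
  simp at this

section Settled

variable {gs : ℕ → ℕ → ℕ} {g : ℕ → ℕ}

def IsSettled (gs : ℕ → ℕ → ℕ) (g : ℕ → ℕ) (j s : ℕ) : Prop := ∀ x < j, ∀ s' ≥ s, gs x s' = g x

theorem IsSettled.mono {j s s' : ℕ} (h : IsSettled gs g j s) (hs : s ≤ s') : IsSettled gs g j s' :=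
  fun x hx t ht => h x hx t (hs.trans ht)

theorem approx_sup_eq_limit {f b e : ℕ → ℕ} (hB : ChainBasis f b) (hb : ∀ j, IsSettled gs g j (b j))
    (he : Injective e) (hne : ∀ i, e i ∉ Set.range f) (x : ℕ) :
    gs x ((Finset.range (x + 2)).sup e) = g x := by
  choose c hc using fun i => (hB.range_eq_compl ▸ hne i : e i ∈ Set.range b)
  obtain ⟨i, hi, hxi⟩ :=
    exists_lt_succ_le_of_injective (c := c) (fun i i' h => he (by rw [← hc, ← hc, h])) (x + 1)
  exact hb (c i) x (by omega) _ ((hc i).trans_le (Finset.le_sup (Finset.mem_range.2 hi)))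

end Settled

def freshNode (j t : ℕ) : ℕ := Nat.pair t (2 * j)

def spineNode (j t : ℕ) : ℕ := Nat.pair t (2 * j + 1)

theorem freshNode_primrec : Primrec₂ freshNode :=
  Primrec₂.natPair.comp Primrec.snd (Primrec.nat_mul.comp (Primrec.const 2) Primrec.fst)

theorem spineNode_primrec : Primrec₂ spineNode :=
  Primrec₂.natPair.comp Primrec.snd
    (Primrec.succ.comp (Primrec.nat_mul.comp (Primrec.const 2) Primrec.fst))

section Nodes

variable {j t j' t' : ℕ}

@[simp] theorem freshNode_inj : freshNode j t = freshNode j' t' ↔ j = j' ∧ t = t' := by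
  simp only [freshNode, Nat.pair_eq_pair]; omega

@[simp] theorem spineNode_inj : spineNode j t = spineNode j' t' ↔ j = j' ∧ t = t' := by
  simp only [spineNode, Nat.pair_eq_pair]; omega

@[simp] theorem freshNode_ne_spineNode : freshNode j t ≠ spineNode j' t' := by
  simp only [freshNode, spineNode, ne_eq, Nat.pair_eq_pair]; omega

@[simp] theorem spineNode_ne_freshNode : spineNode j t ≠ freshNode j' t' :=
  freshNode_ne_spineNode.symm

theorem freshNode_or_spineNode (n : ℕ) : (∃ j t, n = freshNode j t) ∨ ∃ j t, n = spineNode j t := by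
  obtain ⟨j, hj | hj⟩ := Nat.even_or_odd' n.unpair.2
  · exact .inl ⟨j, n.unpair.1, by rw [freshNode, ← hj, Nat.pair_unpair]⟩
  · exact .inr ⟨j, n.unpair.1, by rw [spineNode, ← hj, Nat.pair_unpair]⟩

end Nodes

section Approximation

variable (gs : ℕ → ℕ → ℕ)

def Moves (j k : ℕ) : Prop := ∃ x < j, gs x (k + 1) ≠ gs x k

instance (j k : ℕ) : Decidable (Moves gs j k) := by unfold Moves; infer_instance

def baseStage (j t : ℕ) : ℕ :=
  Nat.rec 0 (fun k b => if Moves gs j k then k + 1 else b) t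

/-- After stage `t`, chain `j` reads `freshNode j (baseStage gs j t) → ⋯ → freshNode j 0 →
spineNode j 0 → ⋯ → spineNode j t`, where the fresh node of a stage `s` at which the chain was not
reset sits between `spineNode j (s - 1)` and `spineNode j s`. -/
def approxSucc (n : ℕ) : ℕ :=
  if n.unpair.2 % 2 = 0 then
    if 0 < n.unpair.1 ∧ Moves gs (n.unpair.2 / 2) (n.unpair.1 - 1) then
      freshNode (n.unpair.2 / 2) (baseStage gs (n.unpair.2 / 2) (n.unpair.1 - 1))
    else spineNode (n.unpair.2 / 2) n.unpair.1
  else if Moves gs (n.unpair.2 / 2) n.unpair.1 then spineNode (n.unpair.2 / 2) (n.unpair.1 + 1)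
  else freshNode (n.unpair.2 / 2) (n.unpair.1 + 1)

variable {gs}

theorem moves_primrecRel (hgs : Primrec₂ gs) : PrimrecRel (Moves gs) :=
  PrimrecRel.exists_lt (Primrec.eq.comp (hgs.comp Primrec.fst (Primrec.succ.comp Primrec.snd))
    (hgs.comp Primrec.fst Primrec.snd)).not

theorem baseStage_primrec (hgs : Primrec₂ gs) : Primrec₂ (baseStage gs) :=
  Primrec.nat_rec (Primrec.const 0) <| Primrec.to₂ <| Primrec.ite
    ((moves_primrecRel hgs).comp Primrec.fst (Primrec.fst.comp Primrec.snd))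
    (Primrec.succ.comp (Primrec.fst.comp Primrec.snd)) (Primrec.snd.comp Primrec.snd)

theorem approxSucc_primrec (hgs : Primrec₂ gs) : Primrec (approxSucc gs) := by
  have ht : Primrec fun n : ℕ => n.unpair.1 := Primrec.fst.comp Primrec.unpair
  have hv : Primrec fun n : ℕ => n.unpair.2 := Primrec.snd.comp Primrec.unpair
  have hj : Primrec fun n : ℕ => n.unpair.2 / 2 := Primrec.nat_div.comp hv (Primrec.const 2)
  have hpred : Primrec fun n : ℕ => n.unpair.1 - 1 := Primrec.nat_sub.comp ht (Primrec.const 1)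
  refine Primrec.ite (Primrec.eq.comp (Primrec.nat_mod.comp hv (Primrec.const 2)) (Primrec.const 0))
    (Primrec.ite (PrimrecPred.and (Primrec.nat_lt.comp (Primrec.const 0) ht)
        ((moves_primrecRel hgs).comp hj hpred))
      (freshNode_primrec.comp hj ((baseStage_primrec hgs).comp hj hpred))
      (spineNode_primrec.comp hj ht))
    (Primrec.ite ((moves_primrecRel hgs).comp hj ht)
      (spineNode_primrec.comp hj (Primrec.succ.comp ht))
      (freshNode_primrec.comp hj (Primrec.succ.comp ht)))

variable {j k t : ℕ}

theorem approxSucc_freshNode_zero : approxSucc gs (freshNode j 0) = spineNode j 0 := by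
  simp [approxSucc, freshNode]

theorem approxSucc_freshNode_succ : approxSucc gs (freshNode j (k + 1)) =
    if Moves gs j k then freshNode j (baseStage gs j k) else spineNode j (k + 1) := by
  simp [approxSucc, freshNode]

theorem approxSucc_spineNode : approxSucc gs (spineNode j k) =
    if Moves gs j k then spineNode j (k + 1) else freshNode j (k + 1) := by
  simp [approxSucc, spineNode, Nat.mul_add_div]

theorem baseStage_succ :
    baseStage gs j (k + 1) = if Moves gs j k then k + 1 else baseStage gs j k :=
  rfl

theorem baseStage_le : baseStage gs j t ≤ t := by
  induction t with
  | zero => exact le_rfl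
  | succ t ih => rw [baseStage_succ]; split_ifs <;> omega

theorem baseStage_mono : Monotone (baseStage gs j) :=
  monotone_nat_of_le_succ fun t => by
    rw [baseStage_succ]; split_ifs
    · exact baseStage_le.trans t.le_succ
    · exact le_rfl

theorem baseStage_succ_of_moves (h : Moves gs j k) : baseStage gs j (k + 1) = k + 1 := by
  rw [baseStage_succ, if_pos h]

theorem moves_of_baseStage_eq_succ (h : baseStage gs j t = k + 1) : Moves gs j k := by
  induction t with
  | zero => exact absurd h (Nat.succ_ne_zero k).symm
  | succ t ih =>
    rw [baseStage_succ] at h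
    split_ifs at h with ht
    · rwa [← Nat.succ_injective h]
    · exact ih h

theorem eq_of_moves_of_baseStage_eq {k' : ℕ} (hk : Moves gs j k) (hk' : Moves gs j k')
    (h : baseStage gs j k = baseStage gs j k') : k = k' := by
  by_contra hne
  wlog hlt : k < k' generalizing k k'
  · exact this hk' hk h.symm (Ne.symm hne) (by omega)
  have := baseStage_mono (gs := gs) (j := j) (Nat.succ_le_of_lt hlt)
  rw [baseStage_succ_of_moves hk, ← h] at this
  exact absurd (this.trans baseStage_le) (by omega)

theorem approxSucc_injective : Injective (approxSucc gs) := by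
  intro m n h
  rcases freshNode_or_spineNode m with ⟨j, t, rfl⟩ | ⟨j, t, rfl⟩ <;>
    rcases freshNode_or_spineNode n with ⟨j', t', rfl⟩ | ⟨j', t', rfl⟩
  · rcases t with _ | k <;> rcases t' with _ | k' <;>
      simp only [approxSucc_freshNode_zero, approxSucc_freshNode_succ] at h <;>
      (try split_ifs at h) <;> simp_all
    obtain ⟨rfl, h⟩ := h
    exact eq_of_moves_of_baseStage_eq (by assumption) (by assumption) h
  · rcases t with _ | k <;>
      simp only [approxSucc_freshNode_zero, approxSucc_freshNode_succ,
        approxSucc_spineNode] at h <;>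
      (try split_ifs at h) <;> simp_all
    obtain ⟨rfl, h⟩ := h
    exact ‹¬_› (moves_of_baseStage_eq_succ h)
  · rcases t' with _ | k' <;>
      simp only [approxSucc_freshNode_zero, approxSucc_freshNode_succ,
        approxSucc_spineNode] at h <;>
      (try split_ifs at h) <;> simp_all
    obtain ⟨rfl, h⟩ := h
    exact ‹¬_› (moves_of_baseStage_eq_succ h.symm)
  · simp only [approxSucc_spineNode] at h
    split_ifs at h <;> simp_all

theorem baseStage_eq_of_forall_not_moves {N : ℕ} (hN : ∀ k ≥ N, ¬Moves gs j k) (ht : N ≤ t) :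
    baseStage gs j t = baseStage gs j N := by
  induction t, ht using Nat.le_induction with
  | base => rfl
  | succ t ht ih => rw [baseStage_succ, if_neg (hN t ht), ih]

theorem not_moves_of_baseStage_le {N : ℕ} (hN : ∀ k ≥ N, ¬Moves gs j k)
    (hk : baseStage gs j N ≤ k) : ¬Moves gs j k := fun h => by
  rcases le_or_gt N k with hNk | hkN
  · exact hN k hNk h
  · have := baseStage_mono (gs := gs) (j := j) (Nat.succ_le_of_lt hkN)
    rw [baseStage_succ_of_moves h] at this
    omega

theorem freshNode_baseStage_notMem_range (h : ∀ k ≥ baseStage gs j t, ¬Moves gs j k) :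
    freshNode j (baseStage gs j t) ∉ Set.range (approxSucc gs) := by
  rintro ⟨n, hn⟩
  rcases freshNode_or_spineNode n with ⟨j', s, rfl⟩ | ⟨j', s, rfl⟩
  · rcases s with _ | k
    · simp [approxSucc_freshNode_zero] at hn
    · rw [approxSucc_freshNode_succ] at hn
      split_ifs at hn with hk
      · obtain ⟨rfl, hb⟩ := freshNode_inj.1 hn
        exact h k (hb ▸ baseStage_le) hk
      · simp at hn
  · rw [approxSucc_spineNode] at hn
    split_ifs at hn with hk
    · simp at hn
    · obtain ⟨rfl, hb⟩ := freshNode_inj.1 hn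
      exact hk (moves_of_baseStage_eq_succ hb.symm)

theorem exists_iterate_eq_of_le (t : ℕ) : ∀ s ≤ t,
    (∃ r, (approxSucc gs)^[r] (freshNode j (baseStage gs j t)) = freshNode j s) ∧
      ∃ r, (approxSucc gs)^[r] (freshNode j (baseStage gs j t)) = spineNode j s := by
  have hstep {a n : ℕ} : (∃ r, (approxSucc gs)^[r] a = n) →
      ∃ r, (approxSucc gs)^[r] a = approxSucc gs n :=
    fun ⟨r, hr⟩ => ⟨r + 1, by rw [iterate_succ_apply', hr]⟩
  induction t with
  | zero =>
    intro s hs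
    obtain rfl := Nat.le_zero.1 hs
    exact ⟨⟨0, rfl⟩, 1, approxSucc_freshNode_zero⟩
  | succ t ih =>
    by_cases hm : Moves gs j t
    · have hprepend {n : ℕ} : (∃ r, (approxSucc gs)^[r] (freshNode j (baseStage gs j t)) = n) →
          ∃ r, (approxSucc gs)^[r] (freshNode j (t + 1)) = n :=
        fun ⟨r, hr⟩ => ⟨r + 1, by rw [iterate_succ_apply, approxSucc_freshNode_succ, if_pos hm, hr]⟩
      rw [baseStage_succ_of_moves hm]
      intro s hs
      rcases Nat.le_succ_iff.1 hs with hs | rfl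
      · exact ⟨hprepend (ih s hs).1, hprepend (ih s hs).2⟩
      · refine ⟨⟨0, rfl⟩, ?_⟩
        simpa only [approxSucc_spineNode, if_pos hm] using hstep (hprepend (ih t le_rfl).2)
    · rw [baseStage_succ, if_neg hm]
      intro s hs
      rcases Nat.le_succ_iff.1 hs with hs | rfl
      · exact ih s hs
      · have hfresh := hstep (ih t le_rfl).2
        rw [approxSucc_spineNode, if_neg hm] at hfresh
        refine ⟨hfresh, ?_⟩
        simpa only [approxSucc_freshNode_succ, if_neg hm] using hstep hfresh

variable {g : ℕ → ℕ}

theorem exists_forall_not_moves (hlim : ∀ x : ℕ, ∃ s₀ : ℕ, ∀ s ≥ s₀, gs x s = g x) (j : ℕ) :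
    ∃ N, ∀ k ≥ N, ¬Moves gs j k := by
  choose s₀ hs₀ using hlim
  refine ⟨(Finset.range j).sup s₀, fun k hk ⟨x, hx, hne⟩ => hne ?_⟩
  have : s₀ x ≤ k := (Finset.le_sup (Finset.mem_range.2 hx)).trans hk
  rw [hs₀ x k this, hs₀ x (k + 1) (by omega)]

theorem isSettled_of_forall_not_moves (hlim : ∀ x : ℕ, ∃ s₀ : ℕ, ∀ s ≥ s₀, gs x s = g x)
    {j s : ℕ} (h : ∀ k ≥ s, ¬Moves gs j k) : IsSettled gs g j s := by
  intro x hx s' hs'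
  obtain ⟨s₀, hs₀⟩ := hlim x
  have hconst (d : ℕ) : gs x (s' + d) = gs x s' := by
    induction d with
    | zero => rfl
    | succ d ih =>
      rw [← ih, ← Nat.add_assoc]
      by_contra hne
      exact h (s' + d) (by omega) ⟨x, hx, hne⟩
  rw [← hconst s₀, hs₀ _ (by omega)]

theorem exists_chainBasis_approxSucc (hlim : ∀ x : ℕ, ∃ s₀ : ℕ, ∀ s ≥ s₀, gs x s = g x) :
    ∃ b, ChainBasis (approxSucc gs) b ∧ ∀ j, IsSettled gs g j (b j) := by
  choose N hN using exists_forall_not_moves hlim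
  have hstable (j : ℕ) : ∀ k ≥ baseStage gs j (N j), ¬Moves gs j k :=
    fun _ => not_moves_of_baseStage_le (hN j)
  refine ⟨fun j => freshNode j (baseStage gs j (N j)),
    ⟨approxSucc_injective, fun j j' h => (freshNode_inj.1 h).1,
      fun j => freshNode_baseStage_notMem_range (hstable j), fun n => ?_⟩,
    fun j => (isSettled_of_forall_not_moves hlim (hstable j)).mono (Nat.left_le_pair _ _)⟩
  have hreach (j s : ℕ) := exists_iterate_eq_of_le (gs := gs) (j := j) (max s (N j)) s
    (le_max_left _ _)
  simp only [baseStage_eq_of_forall_not_moves (hN _) (le_max_right _ _)] at hreach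
  rcases freshNode_or_spineNode n with ⟨j, s, rfl⟩ | ⟨j, s, rfl⟩
  · exact ⟨j, (hreach j s).1⟩
  · exact ⟨j, (hreach j s).2⟩

end Approximation

end InjectionStructure

theorem prcat_delta2_omega_chains (g : ℕ → ℕ) (gs : ℕ → ℕ → ℕ)
    (hgs : Primrec₂ gs) (hlim : ∀ x : ℕ, ∃ s₀ : ℕ, ∀ s ≥ s₀, gs x s = g x) :
    ∃ fA fB a : ℕ → ℕ,
      Primrec fA ∧ Primrec fB ∧ Primrec a ∧
      Function.Injective fA ∧ Function.Injective fB ∧ Function.Injective a ∧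
      (∀ n : ℕ, IsOmegaChain fA n) ∧ (∀ n : ℕ, IsOmegaChain fB n) ∧
      {O : Set ℕ | ∃ n : ℕ, O = Orbit fA n}.Infinite ∧
      (∃ h : ℕ → ℕ, IsInjIso fA fB h) ∧
      Set.range a = (Set.range fA)ᶜ ∧
      (∀ h : ℕ → ℕ, IsInjIso fA fB h → ∀ x : ℕ,
        gs x ((Finset.range (x + 2)).sup fun i => h (a i)) = g x) := by
  open InjectionStructure in
  obtain ⟨b, hB, hb⟩ := exists_chainBasis_approxSucc hlim
  have hA := chainBasis_omegaSucc
  exact ⟨omegaSucc, approxSucc gs, omegaBase, omegaSucc_primrec, approxSucc_primrec hgs,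
    omegaBase_primrec, hA.injective, hB.injective, hA.base_injective, hA.isOmegaChain,
    hB.isOmegaChain, hA.infinite_orbits, ⟨_, hB.isInjIso⟩, hA.range_eq_compl,
    fun h hh => approx_sup_eq_limit hB hb (hh.1.1.comp hA.base_injective)
      fun i => hh.apply_notMem_range (hA.base_notMem_range i)⟩
end

section
/- Let g : ℕ → ℕ be limit computable via a primitive recursive approximation: there is a primitive recursive g* : ℕ → ℕ → ℕ (Primrec₂ g*) such that for every x there is s₀ with g* x s = g x for all s ≥ s₀. Then there exist injective primitive recursive functions f_A, f_B : ℕ → ℕ such that every orbit of f_A is an ω-chain, f_A has infinitely many orbits, (ℕ, f_A) and (ℕ, f_B) are isomorphic, and for every isomorphism h from (ℕ, f_A) to (ℕ, f_B), the function g is Turing reducible to h, i.e., g (viewed as a partial function ℕ →. ℕ) is partial recursive relative to the oracle h. -/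
/-- Partial recursiveness relative to an oracle `g` (Mathlib's `Nat.Partrec`
augmented with an oracle clause); this is Mathlib's later `RecursiveIn`. -/
inductive RecursiveIn' (g : ℕ →. ℕ) : (ℕ →. ℕ) → Prop
  | zero : RecursiveIn' g (pure 0)
  | succ : RecursiveIn' g ↑Nat.succ
  | left : RecursiveIn' g ↑fun n : ℕ => n.unpair.1
  | right : RecursiveIn' g ↑fun n : ℕ => n.unpair.2
  | oracle : RecursiveIn' g g
  | pair {f h : ℕ →. ℕ} : RecursiveIn' g f → RecursiveIn' g h →
      RecursiveIn' g fun n => Nat.pair <$> f n <*> h n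
  | comp {f h : ℕ →. ℕ} : RecursiveIn' g f → RecursiveIn' g h →
      RecursiveIn' g fun n => h n >>= f
  | prec {f h : ℕ →. ℕ} : RecursiveIn' g f → RecursiveIn' g h →
      RecursiveIn' g (Nat.unpaired fun a n =>
        n.rec (f a) fun y IH => do let i ← IH; h (Nat.pair a (Nat.pair y i)))
  | rfind {f : ℕ →. ℕ} : RecursiveIn' g f →
      RecursiveIn' g fun a => Nat.rfind fun n => (fun m => m = 0) <$> f (Nat.pair a n)

/-- `f` is Turing reducible to `g`. -/
def TuringReducible' (f g : ℕ →. ℕ) : Prop := RecursiveIn' g f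

/-!
Structure `A` is the disjoint union of infinitely many copies of `(ℕ, succ)`, one on each row
`{Nat.pair x k | k}`. Row `x` of structure `B` is an ω-chain built primitive recursively from the
approximation `gs x`: whenever `gs x` changes, at stage `s` say, a new element `2 * s` is put in
front of the current first element of the chain. As `gs x` changes only finitely often, the
first element ends up being `2 * L`, with `L` the last change stage, and `g x = gs x (L + 1)`.
An isomorphism `h : A ≅ B` maps first elements to first elements, so `L` is found by searching
for `y` and `k` with `h (Nat.pair y 0) = Nat.pair x k`.
-/

open Function Set

section InjectionStructures

variable {f : ℕ → ℕ} {z : ℕ}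

theorem injective_iterate_of_notMem_range (hf : Injective f) (hz : z ∉ range f) :
    Injective fun m => f^[m] z := by
  intro a b e
  wlog hab : a < b generalizing a b
  · rcases (not_lt.1 hab).lt_or_eq with h | h
    · exact (this e.symm h).symm
    · exact h.symm
  obtain ⟨d, rfl⟩ := Nat.exists_eq_add_of_lt hab
  have hz' : z = f^[d + 1] z := hf.iterate a (by rw [← iterate_add_apply]; exact e)
  exact absurd ⟨f^[d] z, by rw [← iterate_succ_apply' f d, ← hz']⟩ hz

theorem isInjIso_succ_iterate (hf : Injective f) (hz : z ∉ range f)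
    (hreach : ∀ k, ∃ m, f^[m] z = k) : IsInjIso Nat.succ f fun m => f^[m] z :=
  ⟨⟨injective_iterate_of_notMem_range hf hz, hreach⟩, fun m => iterate_succ_apply' f m z⟩

theorem isOmegaChain_iterate (hf : Injective f) (hz : z ∉ range f) (k : ℕ) :
    IsOmegaChain f (f^[k] z) := by
  have hmem : ∀ m, f^[m] z ∈ Orbit f (f^[k] z) := fun m =>
    ⟨m, k, by rw [← iterate_add_apply, ← iterate_add_apply, add_comm]⟩
  exact ⟨Set.infinite_of_injective_forall_mem (injective_iterate_of_notMem_range hf hz) hmem,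
    z, hmem 0, hz⟩

theorem IsInjIso.apply_mem_range_iff {g h : ℕ → ℕ} (hh : IsInjIso f g h) (n : ℕ) :
    h n ∈ range g ↔ n ∈ range f := by
  constructor
  · rintro ⟨b, hb⟩
    obtain ⟨a, rfl⟩ := hh.1.2 b
    exact ⟨a, hh.1.1 (by rw [hh.2, hb])⟩
  · rintro ⟨a, rfl⟩
    exact ⟨h a, (hh.2 a).symm⟩

end InjectionStructures

/-- The disjoint union of the injection structures `(ℕ, F x)`, the `x`-th one placed on the
row `{Nat.pair x k | k : ℕ}`. -/
def rowwise (F : ℕ → ℕ → ℕ) (n : ℕ) : ℕ := Nat.pair n.unpair.1 (F n.unpair.1 n.unpair.2)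

section Rowwise

variable {F : ℕ → ℕ → ℕ}

@[simp]
theorem rowwise_pair (F : ℕ → ℕ → ℕ) (x k : ℕ) :
    rowwise F (Nat.pair x k) = Nat.pair x (F x k) := by
  simp [rowwise]

theorem iterate_rowwise_pair (F : ℕ → ℕ → ℕ) (m x k : ℕ) :
    (rowwise F)^[m] (Nat.pair x k) = Nat.pair x ((F x)^[m] k) := by
  induction m generalizing k with
  | zero => rfl
  | succ m ih => rw [iterate_succ_apply, rowwise_pair, ih, iterate_succ_apply]

theorem pair_mem_range_rowwise {x k : ℕ} :
    Nat.pair x k ∈ range (rowwise F) ↔ k ∈ range (F x) := by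
  constructor
  · rintro ⟨n, hn⟩
    rw [← Nat.pair_unpair n, rowwise_pair, Nat.pair_eq_pair] at hn
    obtain ⟨rfl, hk⟩ := hn
    exact ⟨_, hk⟩
  · rintro ⟨j, rfl⟩
    exact ⟨Nat.pair x j, rowwise_pair F x j⟩

theorem rowwise_injective (hF : ∀ x, Injective (F x)) : Injective (rowwise F) := by
  intro a b e
  rw [← Nat.pair_unpair a, ← Nat.pair_unpair b, rowwise_pair, rowwise_pair,
    Nat.pair_eq_pair] at e
  obtain ⟨h₁, h₂⟩ := e
  rw [h₁] at h₂
  rw [← Nat.pair_unpair a, ← Nat.pair_unpair b, h₁, hF _ h₂]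

theorem isInjIso_rowwise {G H : ℕ → ℕ → ℕ} (hH : ∀ x, IsInjIso (F x) (G x) (H x)) :
    IsInjIso (rowwise F) (rowwise G) (rowwise H) := by
  refine ⟨⟨rowwise_injective fun x => (hH x).1.1, fun t => ?_⟩, fun n => ?_⟩
  · obtain ⟨j, hj⟩ := (hH t.unpair.1).1.2 t.unpair.2
    exact ⟨Nat.pair t.unpair.1 j, by rw [rowwise_pair, hj, Nat.pair_unpair]⟩
  · rw [← Nat.pair_unpair n]
    simp only [rowwise_pair, (hH _).2]

theorem unpair_fst_of_mem_orbit_rowwise {x k b : ℕ}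
    (hb : b ∈ Orbit (rowwise F) (Nat.pair x k)) : b.unpair.1 = x := by
  obtain ⟨m, n, e⟩ := hb
  rw [← Nat.pair_unpair b, iterate_rowwise_pair, iterate_rowwise_pair, Nat.pair_eq_pair] at e
  exact e.1.symm

theorem infinite_setOf_orbit_rowwise (F : ℕ → ℕ → ℕ) :
    {O : Set ℕ | ∃ n, O = Orbit (rowwise F) n}.Infinite := by
  refine Set.infinite_of_injective_forall_mem (f := fun x => Orbit (rowwise F) (Nat.pair x 0))
    (fun x y e => ?_) fun x => ⟨_, rfl⟩
  have hx : Nat.pair x 0 ∈ Orbit (rowwise F) (Nat.pair y 0) := by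
    simp only at e
    exact e ▸ ⟨0, 0, rfl⟩
  simpa using unpair_fst_of_mem_orbit_rowwise hx

theorem primrec_rowwise (hF : Primrec₂ F) : Primrec (rowwise F) :=
  Primrec₂.natPair.comp (Primrec.fst.comp Primrec.unpair)
    (hF.comp (Primrec.fst.comp Primrec.unpair) (Primrec.snd.comp Primrec.unpair))

end Rowwise

theorem rowwise_succ_injective : Injective (rowwise fun _ => Nat.succ) :=
  rowwise_injective fun _ => Nat.succ_injective

theorem pair_mem_range_rowwise_succ {x k : ℕ} :
    Nat.pair x k ∈ range (rowwise fun _ => Nat.succ) ↔ k ≠ 0 := by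
  rw [pair_mem_range_rowwise, Nat.range_succ, mem_ofPred_eq, Nat.pos_iff_ne_zero]

theorem isOmegaChain_rowwise_succ (n : ℕ) : IsOmegaChain (rowwise fun _ => Nat.succ) n := by
  have hn : n = (rowwise fun _ => Nat.succ)^[n.unpair.2] (Nat.pair n.unpair.1 0) := by
    rw [iterate_rowwise_pair, Nat.succ_iterate, zero_add, Nat.pair_unpair]
  rw [hn]
  exact isOmegaChain_iterate rowwise_succ_injective
    (pair_mem_range_rowwise_succ.not.2 (not_not.2 rfl)) _

def prevMark (C : ℕ → Prop) [DecidablePred C] (s : ℕ) : ℕ :=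
  Nat.rec 0 (fun t ih => if C t then t else ih) s

/-- The order `0, 1, 2, …` of `ℕ`, except that each `2 * c` with `c ∈ C` is taken out and put
just before `2 * prevMark C c`. Every new element of `C` thus prepends a new first element; for
finite `C` this is an ω-chain starting at `2 * L`, `L` the largest element of `C ∪ {0}`. -/
def markChain (C : ℕ → Prop) [DecidablePred C] (k : ℕ) : ℕ :=
  if k % 2 = 0 then
    if C (k / 2) then 2 * prevMark C (k / 2) else k + 1
  else
    if C (k / 2 + 1) then k + 2 else k + 1

section MarkChain

variable {C : ℕ → Prop} [DecidablePred C]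

theorem prevMark_succ (s : ℕ) : prevMark C (s + 1) = if C s then s else prevMark C s := rfl

theorem prevMark_lt {s : ℕ} (hs : s ≠ 0) : prevMark C s < s := by
  induction s with
  | zero => contradiction
  | succ t ih =>
    rw [prevMark_succ]
    split_ifs
    · exact t.lt_succ_self
    · rcases Nat.eq_zero_or_pos t with rfl | ht
      · exact Nat.zero_lt_one
      · exact (ih ht.ne').trans t.lt_succ_self

theorem le_prevMark {c s : ℕ} (hc : C c) (hcs : c < s) : c ≤ prevMark C s := by
  induction s with
  | zero => contradiction
  | succ t ih =>
    rw [prevMark_succ]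
    split_ifs with ht
    · exact Nat.le_of_lt_succ hcs
    · exact ih (lt_of_le_of_ne (Nat.le_of_lt_succ hcs) fun h => ht (h ▸ hc))

theorem prevMark_mem (s : ℕ) : C (prevMark C s) ∨ prevMark C s = 0 := by
  induction s with
  | zero => exact Or.inr rfl
  | succ t ih =>
    rw [prevMark_succ]
    split_ifs with ht
    · exact Or.inl ht
    · exact ih

theorem prevMark_lt_prevMark (hC0 : ¬C 0) {s t : ℕ} (hs : C s) (hst : s < t) :
    prevMark C s < prevMark C t :=
  (prevMark_lt fun h => hC0 (h ▸ hs)).trans_le (le_prevMark hs hst)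

theorem markChain_two_mul (s : ℕ) :
    markChain C (2 * s) = if C s then 2 * prevMark C s else 2 * s + 1 := by
  simp [markChain]

theorem markChain_two_mul_add_one (s : ℕ) :
    markChain C (2 * s + 1) = if C (s + 1) then 2 * s + 3 else 2 * s + 2 := by
  have h₁ : (2 * s + 1) % 2 ≠ 0 := by omega
  have h₂ : (2 * s + 1) / 2 = s := by omega
  simp only [markChain, if_neg h₁, h₂]

theorem markChain_two_mul_ne_two_mul_add_one (s t : ℕ) :
    markChain C (2 * s) ≠ markChain C (2 * t + 1) := by
  intro e
  rw [markChain_two_mul, markChain_two_mul_add_one] at e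
  by_cases hs : C s <;> by_cases ht : C (t + 1) <;> simp only [hs, ht, if_true, if_false] at e
  · omega
  · have hpm : prevMark C s = t + 1 := by omega
    exact ht (hpm ▸ (prevMark_mem s).resolve_right (by omega))
  · exact hs (by rwa [show s = t + 1 by omega])
  · omega

theorem markChain_injective (hC0 : ¬C 0) : Injective (markChain C) := by
  intro j j' e
  obtain ⟨s, rfl | rfl⟩ := Nat.even_or_odd' j <;> obtain ⟨t, rfl | rfl⟩ := Nat.even_or_odd' j'
  · rw [markChain_two_mul, markChain_two_mul] at e
    by_cases hs : C s <;> by_cases ht : C t <;> simp only [hs, ht, if_true, if_false] at e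
    · rcases lt_trichotomy s t with hst | rfl | hst
      · have := prevMark_lt_prevMark hC0 hs hst; omega
      · rfl
      · have := prevMark_lt_prevMark hC0 ht hst; omega
    all_goals omega
  · exact absurd e (markChain_two_mul_ne_two_mul_add_one s t)
  · exact absurd e.symm (markChain_two_mul_ne_two_mul_add_one t s)
  · rw [markChain_two_mul_add_one, markChain_two_mul_add_one] at e
    split_ifs at e <;> omega

variable {L : ℕ} (hL : IsGreatest {c | C c ∨ c = 0} L)
include hL

theorem markChain_ne_two_mul (hC0 : ¬C 0) (j : ℕ) : markChain C j ≠ 2 * L := by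
  obtain ⟨s, rfl | rfl⟩ := Nat.even_or_odd' j
  · rw [markChain_two_mul]
    split_ifs with hs
    · have := prevMark_lt (C := C) fun h => hC0 (h ▸ hs)
      have := hL.2 (Or.inl hs)
      omega
    · omega
  · rw [markChain_two_mul_add_one]
    split_ifs with hs
    · omega
    · intro e
      exact hs (by rw [show s + 1 = L by omega]; exact hL.1.resolve_right (by omega))

theorem exists_prevMark_eq {c : ℕ} (hc : C c ∨ c = 0) (hcL : c < L) :
    ∃ s, C s ∧ c < s ∧ s ≤ L ∧ prevMark C s = c := by
  have hCL : C L := hL.1.resolve_right (by omega)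
  have hex : ∃ s, C s ∧ c < s := ⟨L, hCL, hcL⟩
  obtain ⟨s, ⟨hs, hcs⟩, hmin⟩ : ∃ s, (C s ∧ c < s) ∧ ∀ t < s, ¬(C t ∧ c < t) :=
    ⟨Nat.find hex, Nat.find_spec hex, fun t => Nat.find_min hex⟩
  refine ⟨s, hs, hcs, not_lt.1 fun hLs => hmin L hLs ⟨hCL, hcL⟩, le_antisymm ?_ ?_⟩
  · by_contra! hlt
    have hmem := (prevMark_mem (C := C) s).resolve_right (by omega)
    exact hmin _ (prevMark_lt (by omega)) ⟨hmem, hlt⟩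
  · exact hc.elim (le_prevMark · hcs) (· ▸ Nat.zero_le _)

theorem exists_iterate_markChain_eq_two_mul {c : ℕ} (hc : C c ∨ c = 0) :
    ∃ m, (markChain C)^[m] (2 * L) = 2 * c := by
  rcases (hL.2 hc).eq_or_lt with rfl | hcL
  · exact ⟨0, rfl⟩
  obtain ⟨s, hs, hcs, hsL, rfl⟩ := exists_prevMark_eq hL hc hcL
  obtain ⟨m, hm⟩ := exists_iterate_markChain_eq_two_mul (Or.inl hs)
  exact ⟨m + 1, by rw [iterate_succ_apply', hm, markChain_two_mul, if_pos hs]⟩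
termination_by L - c

theorem exists_iterate_markChain_eq (hC0 : ¬C 0) (k : ℕ) :
    ∃ m, (markChain C)^[m] (2 * L) = k := by
  have step : ∀ j, (∃ m, (markChain C)^[m] (2 * L) = j) →
      ∃ m, (markChain C)^[m] (2 * L) = markChain C j := fun j ⟨m, hm⟩ =>
    ⟨m + 1, by rw [iterate_succ_apply', hm]⟩
  obtain ⟨c, rfl | rfl⟩ := Nat.even_or_odd' k
  · by_cases hc : C c ∨ c = 0
    · exact exists_iterate_markChain_eq_two_mul hL hc
    · rw [not_or] at hc
      obtain ⟨d, rfl⟩ := Nat.exists_eq_succ_of_ne_zero hc.2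
      have := step _ (exists_iterate_markChain_eq hC0 (2 * d + 1))
      rwa [markChain_two_mul_add_one, if_neg hc.1] at this
  · by_cases hc : C c
    · obtain ⟨d, rfl⟩ := Nat.exists_eq_succ_of_ne_zero fun h => hC0 (h ▸ hc)
      have := step _ (exists_iterate_markChain_eq hC0 (2 * d + 1))
      rwa [markChain_two_mul_add_one, if_pos hc] at this
    · have := step _ (exists_iterate_markChain_eq hC0 (2 * c))
      rwa [markChain_two_mul, if_neg hc] at this
termination_by k

theorem mem_range_markChain_iff (hC0 : ¬C 0) {k : ℕ} :
    k ∈ range (markChain C) ↔ k ≠ 2 * L := by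
  refine ⟨fun ⟨j, hj⟩ => hj ▸ markChain_ne_two_mul hL hC0 j, fun hk => ?_⟩
  obtain ⟨m, rfl⟩ := exists_iterate_markChain_eq hL hC0 k
  cases m with
  | zero => exact absurd rfl hk
  | succ m => exact ⟨_, (iterate_succ_apply' _ _ _).symm⟩

theorem isInjIso_succ_markChain (hC0 : ¬C 0) :
    IsInjIso Nat.succ (markChain C) fun m => (markChain C)^[m] (2 * L) :=
  isInjIso_succ_iterate (markChain_injective hC0)
    (fun h => (mem_range_markChain_iff hL hC0).1 h rfl) (exists_iterate_markChain_eq hL hC0)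

end MarkChain

section Primrec

variable {C : ℕ → ℕ → Prop} [∀ x, DecidablePred (C x)]

theorem primrec₂_prevMark (hC : PrimrecRel C) : Primrec₂ fun x => prevMark (C x) :=
  Primrec.nat_rec (Primrec.const 0) <| Primrec.to₂ <| Primrec.ite
    (hC.comp Primrec.fst (Primrec.fst.comp Primrec.snd))
    (Primrec.fst.comp Primrec.snd) (Primrec.snd.comp Primrec.snd)

theorem primrec₂_markChain (hC : PrimrecRel C) : Primrec₂ fun x => markChain (C x) := by
  have half : Primrec₂ fun (_ : ℕ) (k : ℕ) => k / 2 :=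
    Primrec.nat_div.comp Primrec.snd (Primrec.const 2)
  have even : PrimrecRel fun (_ : ℕ) (k : ℕ) => k % 2 = 0 :=
    Primrec.eq.comp (Primrec.nat_mod.comp Primrec.snd (Primrec.const 2)) (Primrec.const 0)
  exact Primrec.ite even
    (Primrec.ite (hC.comp Primrec.fst half)
      (Primrec.nat_mul.comp (Primrec.const 2) ((primrec₂_prevMark hC).comp Primrec.fst half))
      (Primrec.succ.comp Primrec.snd))
    (Primrec.ite (hC.comp Primrec.fst (Primrec.succ.comp half))
      (Primrec.succ.comp (Primrec.succ.comp Primrec.snd)) (Primrec.succ.comp Primrec.snd))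

end Primrec

namespace RecursiveIn'

variable {o : ℕ →. ℕ}

theorem of_partrec {f : ℕ →. ℕ} (hf : Nat.Partrec f) : RecursiveIn' o f := by
  induction hf with
  | zero => exact .zero
  | succ => exact .succ
  | left => exact .left
  | right => exact .right
  | pair _ _ ih₁ ih₂ => exact .pair ih₁ ih₂
  | comp _ _ ih₁ ih₂ => exact .comp ih₁ ih₂
  | prec _ _ ih₁ ih₂ => exact .prec ih₁ ih₂
  | rfind _ ih => exact .rfind ih

theorem of_eq {f g : ℕ →. ℕ} (hf : RecursiveIn' o f) (H : ∀ n, f n = g n) : RecursiveIn' o g :=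
  funext H ▸ hf

theorem of_primrec {f : ℕ → ℕ} (hf : Primrec f) : RecursiveIn' o f :=
  of_partrec (Nat.Partrec.of_primrec (Primrec.nat_iff.1 hf))

theorem comp_total {f k : ℕ → ℕ} (hf : RecursiveIn' o f) (hk : RecursiveIn' o k) :
    RecursiveIn' o ↑(fun n => f (k n)) :=
  (hf.comp hk).of_eq fun n => by simp only [PFun.coe_val]; exact Part.bind_some _ _

theorem pair_total {a b : ℕ → ℕ} (ha : RecursiveIn' o a) (hb : RecursiveIn' o b) :
    RecursiveIn' o ↑(fun n => Nat.pair (a n) (b n)) :=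
  (ha.pair hb).of_eq fun n => by simp [PFun.coe_val, Seq.seq]

theorem comp₂ {F : ℕ → ℕ → ℕ} (hF : Primrec₂ F) {a b : ℕ → ℕ} (ha : RecursiveIn' o a)
    (hb : RecursiveIn' o b) : RecursiveIn' o ↑(fun n => F (a n) (b n)) :=
  ((of_primrec (Primrec₂.unpaired.2 hF)).comp_total (ha.pair_total hb)).of_eq fun n => by simp

theorem find {p : ℕ → ℕ} (hp : RecursiveIn' o p) (hex : ∀ x, ∃ n, p (Nat.pair x n) = 0) :
    RecursiveIn' o ↑(fun x => Nat.find (hex x)) :=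
  hp.rfind.of_eq fun x => by
    refine (Part.eq_some_iff.2 (Nat.mem_rfind.2 ⟨?_, fun hm => ?_⟩)).trans
      (PFun.coe_val _ x).symm
    · simpa [PFun.coe_val] using Nat.find_spec (hex x)
    · simpa [PFun.coe_val] using Nat.find_min (hex x) hm

end RecursiveIn'

theorem recursiveIn'_of_isInjIso_rowwise_succ {G : ℕ → ℕ → ℕ} {b : ℕ → ℕ}
    (hb : ∀ x k, k ∉ range (G x) ↔ k = b x) {h : ℕ → ℕ}
    (hh : IsInjIso (rowwise fun _ => Nat.succ) (rowwise G) h) : RecursiveIn' ↑h ↑b := by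
  have hfirst : ∀ y j x k, h (Nat.pair y j) = Nat.pair x k → (j = 0 ↔ k = b x) := by
    intro y j x k e
    rw [← hb, ← pair_mem_range_rowwise, ← e, hh.apply_mem_range_iff,
      pair_mem_range_rowwise_succ, not_not]
  let p : ℕ → ℕ := fun n =>
    if h (Nat.pair n.unpair.2.unpair.1 0) = Nat.pair n.unpair.1 n.unpair.2.unpair.2 then 0 else 1
  have hp : RecursiveIn' ↑h ↑p := by
    have fst : Primrec fun n : ℕ => n.unpair.1 := Primrec.fst.comp Primrec.unpair
    have snd : Primrec fun n : ℕ => n.unpair.2 := Primrec.snd.comp Primrec.unpair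
    have query : Primrec fun n : ℕ => Nat.pair n.unpair.2.unpair.1 0 :=
      Primrec₂.natPair.comp (fst.comp snd) (Primrec.const 0)
    have test : Primrec₂ fun n v : ℕ =>
        if v = Nat.pair n.unpair.1 n.unpair.2.unpair.2 then 0 else 1 :=
      Primrec.ite (Primrec.eq.comp Primrec.snd
          (Primrec₂.natPair.comp (fst.comp Primrec.fst) ((snd.comp snd).comp Primrec.fst)))
        (Primrec.const 0) (Primrec.const 1)
    exact RecursiveIn'.comp₂ test (.of_primrec Primrec.id)
      (RecursiveIn'.oracle.comp_total (.of_primrec query))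
  have hex : ∀ x, ∃ n, p (Nat.pair x n) = 0 := by
    intro x
    obtain ⟨a, ha⟩ := hh.1.2 (Nat.pair x (b x))
    rw [← Nat.pair_unpair a] at ha
    rw [(hfirst _ _ _ _ ha).2 rfl] at ha
    exact ⟨Nat.pair a.unpair.1 (b x), by simp [p, ha]⟩
  refine ((RecursiveIn'.of_primrec (Primrec.snd.comp Primrec.unpair)).comp_total
    (hp.find hex)).of_eq fun x => ?_
  have hsound : ∀ n, p (Nat.pair x n) = 0 → n.unpair.2 = b x := fun n hn =>
    (hfirst _ _ _ _ (by simpa [p] using hn)).1 rfl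
  exact congrArg Part.some (hsound _ (Nat.find_spec (hex x)))

/-- Stage `0` is excluded because `prevMark` uses `0` for "no earlier mark". -/
def IsChangeStage {α : Type*} (u : ℕ → α) (s : ℕ) : Prop := s ≠ 0 ∧ u (s + 1) ≠ u s

instance {α : Type*} [DecidableEq α] (u : ℕ → α) : DecidablePred (IsChangeStage u) :=
  fun _ => instDecidableAnd

theorem primrecRel_isChangeStage {gs : ℕ → ℕ → ℕ} (hgs : Primrec₂ gs) :
    PrimrecRel fun x => IsChangeStage (gs x) :=
  (Primrec.eq.comp Primrec.snd (Primrec.const 0)).not.and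
    (Primrec.eq.comp (hgs.comp Primrec.fst (Primrec.succ.comp Primrec.snd)) hgs).not

theorem exists_isGreatest_isChangeStage {α : Type*} {u : ℕ → α} {v : α}
    (hu : ∃ s₀, ∀ s ≥ s₀, u s = v) :
    ∃ L, IsGreatest {c | IsChangeStage u c ∨ c = 0} L ∧ u (L + 1) = v := by
  classical
  obtain ⟨s₀, hs₀⟩ := hu
  have hlt : ∀ c, IsChangeStage u c → c < s₀ := fun c hc =>
    not_le.1 fun h => hc.2 (by rw [hs₀ c h, hs₀ (c + 1) (by omega)])
  set L := prevMark (IsChangeStage u) s₀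
  have hL : IsGreatest {c | IsChangeStage u c ∨ c = 0} L :=
    ⟨prevMark_mem s₀, fun c hc => hc.elim (fun h => le_prevMark h (hlt c h)) (· ▸ Nat.zero_le _)⟩
  refine ⟨L, hL, ?_⟩
  have hconst : ∀ t, L + 1 ≤ t → u t = u (L + 1) := by
    intro t ht
    induction t, ht using Nat.le_induction with
    | base => rfl
    | succ t ht ih =>
      by_contra hne
      have := hL.2 (Or.inl ⟨by omega, fun e => hne (e.trans ih)⟩)
      omega
  rw [← hconst _ (le_max_right s₀ _), hs₀ _ (le_max_left _ _)]

theorem prcat_delta2_turing (g : ℕ → ℕ) (gs : ℕ → ℕ → ℕ)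
    (hgs : Primrec₂ gs) (hlim : ∀ x : ℕ, ∃ s₀ : ℕ, ∀ s ≥ s₀, gs x s = g x) :
    ∃ fA fB : ℕ → ℕ,
      Primrec fA ∧ Primrec fB ∧ Function.Injective fA ∧ Function.Injective fB ∧
      (∀ n : ℕ, IsOmegaChain fA n) ∧
      {O : Set ℕ | ∃ n : ℕ, O = Orbit fA n}.Infinite ∧
      (∃ h : ℕ → ℕ, IsInjIso fA fB h) ∧
      (∀ h : ℕ → ℕ, IsInjIso fA fB h → TuringReducible' ↑g ↑h) := by
  choose L hL hgL using fun x => exists_isGreatest_isChangeStage (hlim x)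
  have hC0 : ∀ x, ¬IsChangeStage (gs x) 0 := fun _ h => h.1 rfl
  refine ⟨rowwise fun _ => Nat.succ, rowwise fun x => markChain (IsChangeStage (gs x)),
    primrec_rowwise (Primrec.succ.comp Primrec.snd),
    primrec_rowwise (primrec₂_markChain (primrecRel_isChangeStage hgs)),
    rowwise_succ_injective, rowwise_injective fun x => markChain_injective (hC0 x),
    isOmegaChain_rowwise_succ, infinite_setOf_orbit_rowwise _,
    ⟨_, isInjIso_rowwise fun x => isInjIso_succ_markChain (hL x) (hC0 x)⟩, fun h hh => ?_⟩
  have hfirst : RecursiveIn' ↑h ↑fun x => 2 * L x :=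
    recursiveIn'_of_isInjIso_rowwise_succ
      (fun x k => by rw [mem_range_markChain_iff (hL x) (hC0 x), not_not]) hh
  have hgs' : Primrec₂ fun x b => gs x (b / 2 + 1) :=
    hgs.comp Primrec.fst (Primrec.succ.comp (Primrec.nat_div.comp Primrec.snd (Primrec.const 2)))
  exact (RecursiveIn'.comp₂ hgs' (.of_primrec Primrec.id) hfirst).of_eq fun x => by simp [hgL]
end

section
/- Let R : ℕ → ℕ → Bool be primitive recursive (Primrec₂ R). Then there exist injective primitive recursive functions f : ℕ → ℕ and d : ℕ → ℕ, with d injective, such that: every orbit of f is infinite; the orbits O_f(d s) for s : ℕ are pairwise distinct and every n : ℕ belongs to O_f(d s) for some s; and for every s : ℕ, if the set {n : ℕ | R s n = true} is infinite then O_f(d s) is a ζ-chain, while if {n : ℕ | R s n = true} is finite then O_f(d s) is an ω-chain. (Uniform punctual coding of a Π⁰₂ condition into the ζ-chain versus ω-chain type of the orbits.) -/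
/-- The orbit of `a` under `f` is a ζ-chain. -/
def IsZetaChain (f : ℕ → ℕ) (a : ℕ) : Prop :=
  (Orbit f a).Infinite ∧ ∀ b ∈ Orbit f a, b ∈ Set.range f

open Function Nat

namespace Nat

variable {p : ℕ → Prop} [DecidablePred p]

theorem count_add_count_not (n : ℕ) : count p n + count (fun k => ¬p k) n = n := by
  induction n with
  | zero => simp
  | succ n ih => simp only [count_succ]; split_ifs <;> omega

theorem count_findGreatest_sub_one {i : ℕ} (h : count p i ≠ 0) :
    p (findGreatest p (i - 1)) ∧ count p (findGreatest p (i - 1)) + 1 = count p i := by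
  obtain ⟨m, hmi, hm⟩ := count_ne_iff_exists.mp h
  set j := findGreatest p (i - 1)
  have hj : p j := findGreatest_spec (by omega) hm
  have hji : j < i := by have := findGreatest_le (P := p) (i - 1); omega
  refine ⟨hj, ?_⟩
  rw [← count_succ_eq_succ_count_iff.mpr hj]
  refine le_antisymm (count_monotone p hji) (not_lt.mp fun hlt => ?_)
  obtain ⟨x, hx, hpx⟩ := exists_of_count_lt_count hlt
  rw [Set.mem_Ico] at hx
  exact findGreatest_is_greatest hx.1 (by omega) hpx

end Nat

theorem Primrec.nat_count_s7 {α : Type*} [Primcodable α] {f : α → ℕ} {p : α → ℕ → Prop}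
    [DecidableRel p] (hf : Primrec f) (hp : PrimrecRel p) :
    Primrec fun x => count (p x) (f x) :=
  (nat_rec' (h := fun x nih => nih.2 + if p x nih.1 then 1 else 0) hf (const 0)
    (nat_add.comp (snd.comp snd) (ite (hp.comp fst (fst.comp snd)) (const 1) (const 0)))).of_eq
    fun x => by induction f x <;> simp [count_succ, *]

structure IsShiftChart {ι : Type*} (f : ℕ → ℕ) (π : ℕ → ι × ℤ) : Prop where
  injective : Injective π
  apply_map : ∀ n, π (f n) = ((π n).1, (π n).2 + 1)

namespace IsShiftChart

variable {ι : Type*} {f : ℕ → ℕ} {π : ℕ → ι × ℤ}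

theorem apply_iterate (h : IsShiftChart f π) (m n : ℕ) :
    π (f^[m] n) = ((π n).1, (π n).2 + m) := by
  induction m with
  | zero => simp
  | succ m ih => rw [iterate_succ_apply', h.apply_map, ih, Nat.cast_succ, add_assoc]

theorem injective_map (h : IsShiftChart f π) : Injective f := fun a b hab => by
  have := congrArg π hab
  rw [h.apply_map, h.apply_map, Prod.mk.injEq, add_left_inj] at this
  exact h.injective (Prod.ext this.1 this.2)

theorem mem_orbit_iff (h : IsShiftChart f π) {a b : ℕ} :
    b ∈ Orbit f a ↔ (π b).1 = (π a).1 := by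
  constructor
  · rintro ⟨m, n, hmn⟩
    simpa [h.apply_iterate] using (congrArg (fun x => (π x).1) hmn).symm
  · intro hab
    refine ⟨((π b).2 - (π a).2).toNat, ((π a).2 - (π b).2).toNat, h.injective ?_⟩
    rw [h.apply_iterate, h.apply_iterate, hab]
    congr 1
    omega

theorem orbit_infinite (h : IsShiftChart f π) (a : ℕ) : (Orbit f a).Infinite := by
  refine Set.infinite_of_injective_forall_mem (f := fun m => f^[m] a) (fun m n hmn => ?_)
    fun m => ⟨m, 0, rfl⟩
  simpa [h.apply_iterate] using congrArg (fun x => (π x).2) hmn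

theorem mem_range_iff (h : IsShiftChart f π) {b : ℕ} :
    b ∈ Set.range f ↔ ((π b).1, (π b).2 - 1) ∈ Set.range π := by
  constructor
  · rintro ⟨c, rfl⟩
    exact ⟨c, by simp [h.apply_map]⟩
  · rintro ⟨c, hc⟩
    refine ⟨c, h.injective ?_⟩
    rw [h.apply_map, hc]
    simp

theorem isZetaChain (h : IsShiftChart f π) {a : ℕ}
    (hrow : ∀ z, ((π a).1, z) ∈ Set.range π) : IsZetaChain f a :=
  ⟨h.orbit_infinite a, fun _ hb => h.mem_range_iff.mpr (h.mem_orbit_iff.mp hb ▸ hrow _)⟩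

theorem isOmegaChain (h : IsShiftChart f π) {a : ℕ}
    (hrow : BddBelow {z | ((π a).1, z) ∈ Set.range π}) : IsOmegaChain f a := by
  obtain ⟨z, ⟨b, hb⟩, hz⟩ := Int.exists_least_of_bdd
    (P := fun z => ((π a).1, z) ∈ Set.range π) hrow ⟨(π a).2, a, rfl⟩
  refine ⟨h.orbit_infinite a, b, h.mem_orbit_iff.mpr (by simp [hb]), fun hrange => ?_⟩
  have := hz _ (by simpa [hb] using h.mem_range_iff.mp hrange)
  omega

end IsShiftChart

namespace ChainCoding

section Chain

variable (p : ℕ → Prop) [DecidablePred p]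

def IsLeft (k : ℕ) : Prop := k % 2 = 1 ∧ p (k / 2)

instance : DecidablePred (IsLeft p) := fun _ => instDecidableAnd

/-- The left end of the chain is its least element, so a left element `2 i + 1` is followed by the
previous left element, or by `0` if there is none. -/
def chainSucc (k : ℕ) : ℕ :=
  if p (k / 2) then
    if k % 2 = 0 then k + 2
    else if count p (k / 2) = 0 then 0 else 2 * findGreatest p (k / 2 - 1) + 1
  else k + 1

def chainPos (k : ℕ) : ℤ :=
  if IsLeft p k then -(count p (k / 2) + 1 : ℤ) else k - count p (k / 2)

variable {p}

theorem count_isLeft (k : ℕ) : count (IsLeft p) k = count p (k / 2) := by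
  induction k with
  | zero => simp
  | succ k ih =>
    rw [count_succ, ih]
    rcases Nat.mod_two_eq_zero_or_one k with hk | hk
    · rw [show (k + 1) / 2 = k / 2 by omega]
      simp [IsLeft, hk]
    · rw [show (k + 1) / 2 = k / 2 + 1 by omega, count_succ]
      simp [IsLeft, hk]

theorem chainPos_of_not_isLeft {k : ℕ} (hk : ¬IsLeft p k) :
    chainPos p k = count (fun j => ¬IsLeft p j) k := by
  have := count_add_count_not (p := IsLeft p) k
  rw [count_isLeft] at this
  rw [chainPos, if_neg hk]
  omega

theorem chainPos_of_isLeft {k : ℕ} (hk : IsLeft p k) :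
    chainPos p k = -(count (IsLeft p) k + 1 : ℤ) := by
  rw [chainPos, if_pos hk, count_isLeft]

theorem chainPos_injective : Injective (chainPos p) := by
  intro a b hab
  by_cases ha : IsLeft p a <;> by_cases hb : IsLeft p b
  · rw [chainPos_of_isLeft ha, chainPos_of_isLeft hb] at hab
    exact count_injective ha hb (by omega)
  · rw [chainPos_of_isLeft ha, chainPos_of_not_isLeft hb] at hab
    omega
  · rw [chainPos_of_not_isLeft ha, chainPos_of_isLeft hb] at hab
    omega
  · rw [chainPos_of_not_isLeft ha, chainPos_of_not_isLeft hb] at hab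
    exact count_injective (p := fun j => ¬IsLeft p j) ha hb (by omega)

theorem chainPos_zero : chainPos p 0 = 0 := by
  simp [chainPos, IsLeft]

theorem chainPos_two_mul (i : ℕ) : chainPos p (2 * i) = 2 * i - count p i := by
  simp [chainPos, IsLeft]

theorem chainPos_two_mul_add_one (i : ℕ) :
    chainPos p (2 * i + 1) = if p i then -(count p i + 1 : ℤ) else 2 * i + 1 - count p i := by
  simp only [chainPos, IsLeft, show (2 * i + 1) / 2 = i by omega, Nat.mul_add_mod_self_left,
    true_and]
  split_ifs <;> simp

theorem chainSucc_two_mul (i : ℕ) :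
    chainSucc p (2 * i) = if p i then 2 * (i + 1) else 2 * i + 1 := by
  simp only [chainSucc, Nat.mul_div_cancel_left i two_pos, Nat.mul_mod_right, if_true]
  split_ifs <;> omega

theorem chainSucc_two_mul_add_one (i : ℕ) : chainSucc p (2 * i + 1) =
    if p i then (if count p i = 0 then 0 else 2 * findGreatest p (i - 1) + 1) else 2 * (i + 1) := by
  simp only [chainSucc, show (2 * i + 1) / 2 = i by omega, show (2 * i + 1) % 2 = 1 by omega,
    one_ne_zero, if_false]
  split_ifs <;> omega

theorem chainPos_chainSucc (k : ℕ) : chainPos p (chainSucc p k) = chainPos p k + 1 := by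
  obtain ⟨i, rfl | rfl⟩ := Nat.even_or_odd' k
  · rw [chainSucc_two_mul, chainPos_two_mul]
    split_ifs with hi
    · rw [chainPos_two_mul, count_succ_eq_succ_count_iff.mpr hi]
      push_cast; ring
    · rw [chainPos_two_mul_add_one, if_neg hi]
      ring
  · rw [chainSucc_two_mul_add_one, chainPos_two_mul_add_one]
    split_ifs with hi hc
    · rw [chainPos_zero, hc]
      simp
    · obtain ⟨hj, hcount⟩ := count_findGreatest_sub_one hc
      rw [chainPos_two_mul_add_one, if_pos hj, ← hcount]
      push_cast; ring
    · rw [chainPos_two_mul, count_succ_eq_count_iff.mpr hi]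
      push_cast; ring

theorem exists_chainPos_eq_natCast (n : ℕ) : ∃ k, chainPos p k = n := by
  induction n with
  | zero => exact ⟨0, chainPos_zero⟩
  | succ n ih =>
    obtain ⟨k, hk⟩ := ih
    exact ⟨chainSucc p k, by rw [chainPos_chainSucc, hk]; push_cast; rfl⟩

theorem chainPos_surjective (hp : {i | p i}.Infinite) : Surjective (chainPos p) := by
  rintro (n | c)
  · exact exists_chainPos_eq_natCast n
  · refine ⟨2 * nth p c + 1, ?_⟩
    rw [chainPos_two_mul_add_one, if_pos (nth_mem_of_infinite hp c),
      count_nth_of_infinite hp, Int.negSucc_eq]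

theorem bddBelow_range_chainPos (hp : {i | p i}.Finite) : BddBelow (Set.range (chainPos p)) := by
  refine ⟨-(hp.toFinset.card + 1 : ℤ), ?_⟩
  rintro _ ⟨k, rfl⟩
  by_cases hk : IsLeft p k
  · have := count_le_card (p := p) hp (k / 2)
    rw [chainPos, if_pos hk]
    omega
  · rw [chainPos_of_not_isLeft hk]
    omega

end Chain

section Rows

variable (P : ℕ → ℕ → Prop) [DecidableRel P]

def rowSucc (n : ℕ) : ℕ := Nat.pair n.unpair.1 (chainSucc (P n.unpair.1) n.unpair.2)

def rowChart (n : ℕ) : ℕ × ℤ := (n.unpair.1, chainPos (P n.unpair.1) n.unpair.2)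

variable {P}

theorem rowChart_pair (s k : ℕ) : rowChart P (Nat.pair s k) = (s, chainPos (P s) k) := by
  simp [rowChart]

theorem mem_range_rowChart {s : ℕ} {z : ℤ} :
    (s, z) ∈ Set.range (rowChart P) ↔ z ∈ Set.range (chainPos (P s)) := by
  constructor
  · rintro ⟨n, hn⟩
    obtain ⟨rfl, rfl⟩ := Prod.mk.inj hn
    exact ⟨_, rfl⟩
  · rintro ⟨k, rfl⟩
    exact ⟨Nat.pair s k, rowChart_pair s k⟩

theorem isShiftChart_rowChart : IsShiftChart (rowSucc P) (rowChart P) where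
  injective a b hab := by
    obtain ⟨hs, hk⟩ := Prod.mk.inj hab
    rw [hs] at hk
    exact Nat.pairEquiv.symm.injective (Prod.ext hs (chainPos_injective hk))
  apply_map n := by simp [rowChart, rowSucc, chainPos_chainSucc]

theorem mem_orbit_rowSucc {s k n : ℕ} :
    n ∈ Orbit (rowSucc P) (Nat.pair s k) ↔ n.unpair.1 = s := by
  rw [isShiftChart_rowChart.mem_orbit_iff, rowChart_pair]
  rfl

theorem isZetaChain_rowSucc {s : ℕ} (hs : {i | P s i}.Infinite) (k : ℕ) :
    IsZetaChain (rowSucc P) (Nat.pair s k) := by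
  refine isShiftChart_rowChart.isZetaChain fun z => ?_
  rw [rowChart_pair]
  exact mem_range_rowChart.mpr (chainPos_surjective hs z)

theorem isOmegaChain_rowSucc {s : ℕ} (hs : {i | P s i}.Finite) (k : ℕ) :
    IsOmegaChain (rowSucc P) (Nat.pair s k) := by
  refine isShiftChart_rowChart.isOmegaChain ?_
  rw [rowChart_pair]
  exact (bddBelow_range_chainPos hs).mono fun z hz => mem_range_rowChart.mp hz

open Primrec in
theorem primrec_chainSucc (hP : PrimrecRel P) : Primrec₂ fun s k => chainSucc (P s) k := by
  have half : Primrec fun x : ℕ × ℕ => x.2 / 2 := nat_div.comp snd (const 2)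
  have hPhalf : PrimrecPred fun x : ℕ × ℕ => P x.1 (x.2 / 2) := hP.comp fst half
  unfold chainSucc
  refine ite hPhalf (ite ?_ ?_ (ite ?_ (const 0) ?_)) ?_
  · exact Primrec.eq.comp (nat_mod.comp snd (const 2)) (const 0)
  · exact nat_add.comp snd (const 2)
  · exact Primrec.eq.comp (nat_count_s7 half (hP.comp (fst.comp fst) snd)) (const 0)
  · exact nat_add.comp (nat_mul.comp (const 2) (nat_findGreatest
      (nat_sub.comp half (const 1)) (hP.comp (fst.comp fst) snd))) (const 1)
  · exact nat_add.comp snd (const 1)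

open Primrec in
theorem primrec_rowSucc (hP : PrimrecRel P) : Primrec (rowSucc P) :=
  have hs : Primrec fun n : ℕ => n.unpair.1 := fst.comp unpair
  Primrec₂.natPair.comp hs ((primrec_chainSucc hP).comp hs (snd.comp unpair))

end Rows

end ChainCoding

open ChainCoding in
theorem punctual_pi2_coding (R : ℕ → ℕ → Bool) (hR : Primrec₂ R) :
    ∃ f d : ℕ → ℕ,
      Primrec f ∧ Primrec d ∧ Function.Injective f ∧ Function.Injective d ∧
      (∀ n : ℕ, (Orbit f n).Infinite) ∧
      (∀ s t : ℕ, s ≠ t → Orbit f (d s) ≠ Orbit f (d t)) ∧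
      (∀ n : ℕ, ∃ s : ℕ, n ∈ Orbit f (d s)) ∧
      (∀ s : ℕ,
        ({n : ℕ | R s n = true}.Infinite → IsZetaChain f (d s)) ∧
        ({n : ℕ | R s n = true}.Finite → IsOmegaChain f (d s))) := by
  let P (s n : ℕ) : Prop := R s n = true
  have hP : PrimrecRel P := Primrec.eq.comp₂ hR (Primrec₂.const true)
  refine ⟨rowSucc P, fun s => Nat.pair s 0, primrec_rowSucc hP,
    Primrec₂.natPair.comp .id (.const 0), isShiftChart_rowChart.injective_map,
    fun s t hst => (Nat.pair_eq_pair.mp hst).1, isShiftChart_rowChart.orbit_infinite,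
    fun s t hst heq => hst ?_, fun n => ⟨n.unpair.1, mem_orbit_rowSucc.mpr rfl⟩,
    fun s => ⟨(isZetaChain_rowSucc · 0), (isOmegaChain_rowSucc · 0)⟩⟩
  have hs : Nat.pair s 0 ∈ Orbit (rowSucc P) (Nat.pair t 0) :=
    heq ▸ mem_orbit_rowSucc.mpr (by simp)
  simpa using mem_orbit_rowSucc.mp hs
end
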